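/- arXiv:2401.07376 — 7 statements merged into one kernel-verified Lean document; each statement's English description precedes it below -/
import Mathlib

section
/- Let G be a finite simple graph containing a triangle on vertices x, y, z such that the vertex x has degree exactly 2 (so the only neighbors of x are y and z). Then cp(G − {y, z}) ≤ cp(G) − 1, where G − {y, z} is the induced subgraph of G obtained by deleting y and z. -/
open SimpleGraph

/-- `S` is the vertex set (support) of some cycle appearing in `G` as a subgraph. -/
def SimpleGraph.IsCycleSupport {V : Type*} (G : SimpleGraph V) (S : Set V) : Prop :=
  ∃ (v : V) (w : G.Walk v v), w.IsCycle ∧ S = {x | x ∈ w.support}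

/-- `P` is a cycle packing of `G`: a finite family of vertex sets of pairwise
vertex-disjoint cycles of `G`. -/
def SimpleGraph.IsCyclePacking {V : Type*} (G : SimpleGraph V) (P : Finset (Set V)) : Prop :=
  (∀ S ∈ P, G.IsCycleSupport S) ∧ (P : Set (Set V)).Pairwise Disjoint

/-- `cp G` : the maximum size of a cycle packing of `G`. -/
noncomputable def SimpleGraph.cp {V : Type*} (G : SimpleGraph V) : ℕ :=
  sSup {n | ∃ P : Finset (Set V), G.IsCyclePacking P ∧ P.card = n}

/-- `fvs G` : the minimum size of a feedback vertex set of `G`, i.e. of a set `S` of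
vertices such that deleting `S` from `G` leaves an acyclic graph. -/
noncomputable def SimpleGraph.fvs {V : Type*} (G : SimpleGraph V) : ℕ :=
  sInf {n | ∃ S : Finset V, (G.induce {v | v ∉ S}).IsAcyclic ∧ S.card = n}


theorem cp_deleteTwo_of_triangle_degTwo {V : Type*} [Fintype V] [DecidableEq V]
    (G : SimpleGraph V) [DecidableRel G.Adj] (x y z : V)
    (hxy : G.Adj x y) (hyz : G.Adj y z) (hxz : G.Adj x z)
    (hdeg : G.degree x = 2) :
    (G.induce {v | v ≠ y ∧ v ≠ z}).cp ≤ G.cp - 1 := by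
  classical
  set s : Set V := {v | v ≠ y ∧ v ≠ z} with hs
  set G' := G.induce s with hG'
  -- neighbors of x are exactly y and z
  have hnb : ∀ u, G.Adj x u → u = y ∨ u = z := by
    intro u hu
    have hsub : ({y, z} : Finset V) ⊆ G.neighborFinset x := by
      intro a ha
      simp only [Finset.mem_insert, Finset.mem_singleton] at ha
      rcases ha with rfl | rfl <;> simp [hxy, hxz]
    have hcard : ({y, z} : Finset V).card = 2 := by
      rw [Finset.card_insert_of_notMem (by simp [hyz.ne]), Finset.card_singleton]
    have heq : ({y, z} : Finset V) = G.neighborFinset x :=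
      Finset.eq_of_subset_of_card_le hsub (by rw [hcard, ← hdeg, SimpleGraph.degree])
    have : u ∈ ({y, z} : Finset V) := by rw [heq]; simp [hu]
    simpa using this
  -- x is in no cycle of G'
  have hxnc : ∀ (v : s) (w : G'.Walk v v), w.IsCycle → ∀ hx : x ∈ s, (⟨x, hx⟩ : s) ∉ w.support := by
    intro v w hw hx hmem
    have hw' := hw.rotate hmem
    cases hrot : w.rotate _ hmem with
    | nil => rw [hrot] at hw'; exact hw'.not_nil Walk.nil_nil
    | cons h q =>
      rw [hrot] at hw'
      rename_i b
      have hadj : G.Adj x b.1 := h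
      rcases hnb b.1 hadj with h1 | h1
      · exact b.2.1 h1
      · exact b.2.2 h1
  -- the set of packing sizes is bounded
  haveI : Fintype (Set V) := Fintype.ofFinite _
  have hbdd : ∀ (H : SimpleGraph V),
      BddAbove {n | ∃ P : Finset (Set V), H.IsCyclePacking P ∧ P.card = n} := by
    intro H
    refine ⟨Fintype.card (Set V), ?_⟩
    rintro n ⟨P, _, rfl⟩
    exact Finset.card_le_univ P
  haveI : Fintype (Set s) := Fintype.ofFinite _
  have hbdd' : BddAbove {n | ∃ P : Finset (Set s), G'.IsCyclePacking P ∧ P.card = n} := by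
    refine ⟨Fintype.card (Set s), ?_⟩
    rintro n ⟨P, _, rfl⟩
    exact Finset.card_le_univ P
  have hne : ({0} : Set ℕ) ⊆ {n | ∃ P : Finset (Set s), G'.IsCyclePacking P ∧ P.card = n} := by
    rintro n hn
    simp only [Set.mem_singleton_iff] at hn
    subst hn
    exact ⟨∅, ⟨fun S hS => absurd hS (Finset.notMem_empty S), by simp⟩, rfl⟩
  -- obtain a maximum packing of G'
  have hmem : G'.cp ∈ {n | ∃ P : Finset (Set s), G'.IsCyclePacking P ∧ P.card = n} :=
    Nat.sSup_mem ⟨0, hne rfl⟩ hbdd'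
  obtain ⟨P, hP, hPcard⟩ := hmem
  -- build the packing of G
  set T : Set V := {x, y, z} with hT
  set Q : Finset (Set V) := insert T (P.image (Set.image (Subtype.val : s → V))) with hQ
  have himg_inj : Function.Injective (Set.image (Subtype.val : s → V)) :=
    Set.image_injective.mpr Subtype.val_injective
  have hSsub : ∀ S ∈ P, ∀ a ∈ Subtype.val '' S, a ∈ s := by
    rintro S hS a ⟨b, _, rfl⟩; exact b.2
  have hxnotin : ∀ S ∈ P, x ∉ Subtype.val '' S := by
    rintro S hS ⟨b, hbS, hbx⟩
    obtain ⟨v, w, hw, hSw⟩ := hP.1 S hS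
    have hx : x ∈ s := b.2.imp (hbx ▸ fun h => h) (hbx ▸ fun h => h)
    have : (⟨x, hx⟩ : s) ∈ w.support := by
      have hb : b ∈ w.support := by rw [hSw] at hbS; exact hbS
      have : (⟨x, hx⟩ : s) = b := Subtype.ext hbx.symm
      rw [this]; exact hb
    exact hxnc v w hw hx this
  have hTnot : T ∉ P.image (Set.image (Subtype.val : s → V)) := by
    simp only [Finset.mem_image]
    rintro ⟨S, hS, hST⟩
    have : y ∈ T := by simp [hT]
    rw [← hST] at this
    exact (hSsub S hS y this).1 rfl
  have hQcard : Q.card = P.card + 1 := by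
    rw [hQ, Finset.card_insert_of_notMem hTnot, Finset.card_image_of_injective _ himg_inj]
  have hQpack : G.IsCyclePacking Q := by
    constructor
    · intro S hS
      rw [hQ, Finset.mem_insert] at hS
      rcases hS with rfl | hS
      · refine ⟨x, Walk.cons hxy (Walk.cons hyz (Walk.cons hxz.symm Walk.nil)), ?_, ?_⟩
        · simp [Walk.isCycle_def, Walk.isTrail_def, hxy.ne, hyz.ne, hxz.ne, Sym2.eq,
            Sym2.rel_iff', hxy.ne', hyz.ne', hxz.ne']
        · ext a; simp [hT]; tauto
      · rw [Finset.mem_image] at hS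
        obtain ⟨S', hS', rfl⟩ := hS
        obtain ⟨v, w, hw, hSw⟩ := hP.1 S' hS'
        refine ⟨v.1, w.map (Embedding.induce (G := G) s).toHom,
          hw.map (Embedding.induce (G := G) s).injective, ?_⟩
        rw [hSw]
        ext a
        erw [Walk.support_map]
        simp only [Walk.support_map, Set.mem_setOf_eq, Set.mem_image,
          List.mem_map]
        constructor
        · rintro ⟨b, hb, rfl⟩
          exact ⟨b, hb, rfl⟩
        · rintro ⟨b, hb, rfl⟩
          exact ⟨b, hb, rfl⟩
    · have hdisjT : ∀ S ∈ P, Disjoint T (Subtype.val '' S) := by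
        intro S hS
        rw [Set.disjoint_left]
        intro a ha haS
        simp only [hT, Set.mem_insert_iff, Set.mem_singleton_iff] at ha
        rcases ha with rfl | rfl | rfl
        · exact hxnotin S hS haS
        · exact (hSsub S hS _ haS).1 rfl
        · exact (hSsub S hS _ haS).2 rfl
      rw [hQ, Finset.coe_insert]
      refine Set.Pairwise.insert ?_ ?_
      · rintro A hA B hB hAB
        rw [Finset.coe_image, Set.mem_image] at hA hB
        obtain ⟨A', hA', rfl⟩ := hA
        obtain ⟨B', hB', rfl⟩ := hB
        have hAB' : A' ≠ B' := fun h => hAB (by rw [h])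
        have := hP.2 hA' hB' hAB'
        exact (Set.disjoint_image_iff Subtype.val_injective).mpr this
      · intro A hA hTA
        rw [Finset.coe_image, Set.mem_image] at hA
        obtain ⟨A', hA', rfl⟩ := hA
        exact ⟨hdisjT A' hA', (hdisjT A' hA').symm⟩
  have hstep : G'.cp + 1 ∈ {n | ∃ P : Finset (Set V), G.IsCyclePacking P ∧ P.card = n} :=
    ⟨Q, hQpack, by rw [hQcard, hPcard]⟩
  have hle : G'.cp + 1 ≤ G.cp := le_csSup (hbdd G) hstep
  omega
end

section
/- Let G be a finite simple graph containing a triangle on vertices x, y, z such that the vertex x has degree exactly 3. Then cp(G − {y, z}) ≤ cp(G) − 1, where G − {y, z} is the induced subgraph of G obtained by deleting y and z. -/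
open SimpleGraph

/-- Any vertex on a cycle has two distinct neighbors. -/
lemma exists_two_adj_of_mem_support_isCycle {V : Type*} [DecidableEq V] {G : SimpleGraph V}
    {a : V} {c : G.Walk a a} (hc : c.IsCycle) {u : V} (hu : u ∈ c.support) :
    ∃ b₁ b₂ : V, b₁ ≠ b₂ ∧ G.Adj u b₁ ∧ G.Adj u b₂ := by
  have hcy := hc.rotate hu
  have h3 := hcy.three_le_length
  obtain ⟨b₁, h₁, q, hq⟩ := Walk.not_nil_iff.mp hcy.not_nil
  rw [hq] at hcy h3
  rw [Walk.cons_isCycle_iff] at hcy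
  have hql : 2 ≤ q.length := by simp [Walk.length_cons] at h3; omega
  have hqrev : ¬ q.reverse.Nil := by
    rw [Walk.nil_iff_length_eq, Walk.length_reverse]; omega
  obtain ⟨b₂, h₂, r, hr⟩ := Walk.not_nil_iff.mp hqrev
  refine ⟨b₁, b₂, ?_, h₁, h₂⟩
  rintro rfl
  apply hcy.2
  have : s(u, b₁) ∈ q.reverse.edges := by rw [hr]; simp
  rwa [Walk.edges_reverse, List.mem_reverse] at this
theorem cp_deleteTwo_of_triangle_degThree {V : Type*} [Fintype V] [DecidableEq V]
    (G : SimpleGraph V) [DecidableRel G.Adj] (x y z : V)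
    (hxy : G.Adj x y) (hyz : G.Adj y z) (hxz : G.Adj x z)
    (hdeg : G.degree x = 3) :
    (G.induce {v | v ≠ y ∧ v ≠ z}).cp ≤ G.cp - 1 := by
  classical
  set s : Set V := {v | v ≠ y ∧ v ≠ z} with hs
  set G' := G.induce s with hG'
  have hxs : x ∈ s := ⟨hxy.ne, hxz.ne⟩
  -- no cycle of G' contains x
  have hxnot : ∀ (S : Set s), G'.IsCycleSupport S → (⟨x, hxs⟩ : s) ∉ S := by
    rintro S ⟨v, w, hw, rfl⟩ hxS
    obtain ⟨b₁, b₂, hb, h1, h2⟩ := exists_two_adj_of_mem_support_isCycle hw hxS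
    have ha1 : G.Adj x (b₁ : V) := h1
    have ha2 : G.Adj x (b₂ : V) := h2
    have hsub : ({(b₁ : V), (b₂ : V), y, z} : Finset V) ⊆ G.neighborFinset x := by
      intro a ha
      simp only [Finset.mem_insert, Finset.mem_singleton] at ha
      rw [SimpleGraph.mem_neighborFinset]
      rcases ha with rfl | rfl | rfl | rfl
      exacts [ha1, ha2, hxy, hxz]
    have hbne : (b₁ : V) ≠ (b₂ : V) := fun h => hb (Subtype.ext h)
    have hcard : ({(b₁ : V), (b₂ : V), y, z} : Finset V).card = 4 := by
      rw [Finset.card_insert_of_notMem (by simp [hbne, b₁.2.1, b₁.2.2]),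
        Finset.card_insert_of_notMem (by simp [b₂.2.1, b₂.2.2]),
        Finset.card_insert_of_notMem (by simp [hyz.ne]), Finset.card_singleton]
    have := Finset.card_le_card hsub
    rw [hcard] at this
    rw [SimpleGraph.degree] at hdeg
    omega
  -- the packing-size sets
  have hbdd : ∀ n ∈ {n | ∃ P : Finset (Set V), G.IsCyclePacking P ∧ P.card = n},
      n ≤ Fintype.card (Set V) := by
    rintro n ⟨P, _, rfl⟩
    exact Finset.card_le_univ P
  -- key step : any packing of G' of size n yields a packing of G of size n+1
  have key : ∀ n ∈ {n | ∃ P : Finset (Set s), G'.IsCyclePacking P ∧ P.card = n},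
      n + 1 ≤ G.cp := by
    rintro n ⟨P, hP, rfl⟩
    -- the triangle cycle
    set w₀ : G.Walk x x := Walk.cons hxy (Walk.cons hyz (Walk.cons hxz.symm Walk.nil)) with hw₀def
    have hw₀ : w₀.IsCycle := by
      rw [hw₀def, Walk.cons_isCycle_iff]
      constructor
      · rw [Walk.isPath_def]
        simp [hyz.ne, hxy.ne', hxz.ne']
      · simp [Sym2.eq, Sym2.rel_iff', hxy.ne, hxz.ne, hxy.ne', hyz.ne', hyz.ne]
    have hw₀supp : {v | v ∈ w₀.support} = ({x, y, z} : Set V) := by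
      ext a; simp [hw₀def, or_comm, or_assoc, or_left_comm]
    -- images of the packing sets
    have hximg : ∀ S ∈ P, Disjoint ({x, y, z} : Set V) (Subtype.val '' S) := by
      intro S hS
      rw [Set.disjoint_left]
      rintro a (rfl | rfl | rfl) haS
      · obtain ⟨u, huS, hux⟩ := haS
        have : u = ⟨a, hxs⟩ := Subtype.ext hux
        exact hxnot S (hP.1 S hS) (this ▸ huS)
      · obtain ⟨u, _, hu⟩ := haS
        exact u.2.1 hu
      · obtain ⟨u, _, hu⟩ := haS
        exact u.2.2 hu
    set P' : Finset (Set V) := insert ({x, y, z} : Set V) (P.image (fun S => Subtype.val '' S))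
      with hP'def
    have hmemP' : ({x, y, z} : Set V) ∉ P.image (fun S => Subtype.val '' S) := by
      rw [Finset.mem_image]
      rintro ⟨S, hS, heq⟩
      have hy : y ∈ Subtype.val '' S := by rw [heq]; simp
      obtain ⟨u, _, hu⟩ := hy
      exact u.2.1 hu
    have hcardP' : P'.card = P.card + 1 := by
      rw [hP'def, Finset.card_insert_of_notMem hmemP',
        Finset.card_image_of_injective P (Set.image_injective.mpr Subtype.val_injective)]
    have hpack : G.IsCyclePacking P' := by
      constructor
      · intro S hS
        rw [hP'def, Finset.mem_insert] at hS
        rcases hS with rfl | hS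
        · exact ⟨x, w₀, hw₀, hw₀supp.symm⟩
        · rw [Finset.mem_image] at hS
          obtain ⟨T, hT, rfl⟩ := hS
          obtain ⟨v, w, hw, rfl⟩ := hP.1 T hT
          refine ⟨(v : V), w.map (Embedding.induce (G := G) s).toHom,
            hw.map (Embedding.induce (G := G) s).injective, ?_⟩
          ext a
          simp only [Set.mem_image, Set.mem_setOf_eq, Walk.support_map, List.mem_map]
          constructor
          · rintro ⟨u, hu, rfl⟩
            exact (congrArg (fun l => (u : V) ∈ l) (Walk.support_map (Embedding.induce (G := G) s).toHom w)).mpr (List.mem_map.mpr ⟨u, hu, rfl⟩)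
          · intro h
            obtain ⟨u, hu, rfl⟩ := List.mem_map.mp ((congrArg (fun l => a ∈ l) (Walk.support_map (Embedding.induce (G := G) s).toHom w)).mp h)
            exact ⟨u, hu, rfl⟩
      · intro a ha b hb hab
        simp only [hP'def, Finset.coe_insert, Set.mem_insert_iff, Finset.mem_coe,
          Finset.mem_image] at ha hb
        rcases ha with rfl | ⟨S, hS, rfl⟩
        · rcases hb with rfl | ⟨T, hT, rfl⟩
          · exact absurd rfl hab
          · exact hximg T hT
        · rcases hb with rfl | ⟨T, hT, rfl⟩
          · exact (hximg S hS).symm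
          · have hST : S ≠ T := fun h => hab (by rw [h])
            exact (Set.disjoint_image_iff Subtype.val_injective).mpr (hP.2 hS hT hST)
    have : P.card + 1 ∈ {n | ∃ Q : Finset (Set V), G.IsCyclePacking Q ∧ Q.card = n} :=
      ⟨P', hpack, hcardP'⟩
    exact le_csSup ⟨Fintype.card (Set V), hbdd⟩ this
  have hne : (0 : ℕ) ∈ {n | ∃ P : Finset (Set s), G'.IsCyclePacking P ∧ P.card = n} :=
    ⟨∅, ⟨fun S h => absurd h (Finset.notMem_empty S), by simp⟩, Finset.card_empty⟩
  rw [SimpleGraph.cp]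
  exact csSup_le ⟨0, hne⟩ (fun n hn => by have := key n hn; omega)
end

section
/- Let G be a finite simple graph containing a triangle on vertices x, y, z, and suppose that in the induced subgraph G − {y, z} (obtained by deleting y and z) the vertex x lies on no cycle. Then cp(G) ≥ cp(G − {y, z}) + 1. -/
open SimpleGraph

theorem cp_deleteTwo_add_one_le_of_triangle {V : Type*} [Fintype V] [DecidableEq V]
    (G : SimpleGraph V) (x y z : V)
    (hxy : G.Adj x y) (hyz : G.Adj y z) (hxz : G.Adj x z)
    (hnc : ¬ ∃ (a : {v : V // v ≠ y ∧ v ≠ z})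
        (w : (G.induce {v | v ≠ y ∧ v ≠ z}).Walk a a),
        w.IsCycle ∧ (⟨x, hxy.ne, hxz.ne⟩ : {v : V // v ≠ y ∧ v ≠ z}) ∈ w.support) :
    (G.induce {v | v ≠ y ∧ v ≠ z}).cp + 1 ≤ G.cp := by
  classical
  set s : Set V := {v | v ≠ y ∧ v ≠ z} with hs
  set G' := G.induce s with hG'
  -- obtain a maximum packing of G'
  have hne : ({n | ∃ P : Finset (Set ↥s), G'.IsCyclePacking P ∧ P.card = n}).Nonempty :=
    ⟨0, ∅, ⟨by simp [SimpleGraph.IsCyclePacking], by simp⟩⟩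
  have hbdd : BddAbove {n | ∃ P : Finset (Set ↥s), G'.IsCyclePacking P ∧ P.card = n} :=
    ⟨Fintype.card (Set ↥s), fun n ⟨P, _, hc⟩ => hc ▸ P.card_le_univ⟩
  obtain ⟨P, hP, hPcard⟩ := Nat.sSup_mem hne hbdd
  -- the triangle cycle and its support
  have w0 : G.Walk x x :=
    Walk.cons hxy (Walk.cons hyz (Walk.cons hxz.symm Walk.nil))
  have hw0 : (Walk.cons hxy (Walk.cons hyz (Walk.cons hxz.symm Walk.nil))).IsCycle := by
    have h1 := hxy.ne; have h2 := hyz.ne; have h3 := hxz.ne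
    simp only [Walk.isCycle_def, Walk.isTrail_def, Walk.edges_cons, Walk.edges_nil,
      Walk.support_cons, Walk.support_nil, List.tail_cons, List.nodup_cons, List.nodup_nil,
      List.mem_cons, List.not_mem_nil, List.mem_singleton, Sym2.eq_iff, or_false, and_true,
      not_or, ne_eq]
    refine ⟨?_, by simp, ?_⟩ <;> aesop
  -- the embedding
  have fInj : Function.Injective (Subtype.val : ↥s → V) := Subtype.val_injective
  have himgInj : Function.Injective (fun S : Set ↥s => Subtype.val '' S) :=
    Set.image_injective.mpr fInj
  -- x is in no packed set
  have hxnot : ∀ S ∈ P, (⟨x, hxy.ne, hxz.ne⟩ : ↥s) ∉ S := by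
    intro S hS hxS
    obtain ⟨v, w, hw, hSe⟩ := hP.1 S hS
    rw [hSe] at hxS
    exact hnc ⟨v, w, hw, hxS⟩
  -- the lifted packing
  set T0 : Set V := {x, y, z} with hT0
  set Q : Finset (Set V) := insert T0 (P.image (fun S => Subtype.val '' S)) with hQ
  have hT0img : ∀ S ∈ P, T0 ≠ Subtype.val '' S ∧ Disjoint T0 (Subtype.val '' S) := by
    intro S hS
    have hdisj : Disjoint T0 (Subtype.val '' S) := by
      rw [Set.disjoint_left]
      intro v hv hmem
      obtain ⟨u, huS, huv⟩ := hmem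
      rcases hv with h | h | h
      · refine hxnot S hS ?_
        have he : (⟨x, hxy.ne, hxz.ne⟩ : ↥s) = u := Subtype.ext (huv.trans h).symm
        rwa [he]
      · exact u.2.1 (huv.trans h)
      · exact u.2.2 (huv.trans h)
    refine ⟨fun h => ?_, hdisj⟩
    have hx1 : x ∈ T0 := by simp [hT0]
    have hx2 : x ∈ Subtype.val '' S := h ▸ hx1
    exact Set.disjoint_left.mp hdisj hx1 hx2
  have hQpack : G.IsCyclePacking Q := by
    constructor
    · intro S hS
      rw [hQ, Finset.mem_insert] at hS
      rcases hS with rfl | hS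
      · exact ⟨x, _, hw0, by ext v; simp [hT0]; tauto⟩
      · obtain ⟨S', hS', rfl⟩ := Finset.mem_image.mp hS
        obtain ⟨v, w, hw, rfl⟩ := hP.1 S' hS'
        refine ⟨(v : V), w.map (Embedding.induce s).toHom,
          hw.map fInj, ?_⟩
        ext u
        constructor
        · rintro ⟨a, ha, rfl⟩
          change (a : V) ∈ (w.map (Embedding.induce s).toHom).support
          simp only [Set.mem_setOf_eq, Walk.support_map, List.mem_map]
          exact ⟨a, ha, rfl⟩
        · intro hu
          change u ∈ (w.map (Embedding.induce s).toHom).support at hu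
          simp only [Set.mem_setOf_eq, Walk.support_map, List.mem_map] at hu
          obtain ⟨a, ha, rfl⟩ := hu
          exact ⟨a, ha, rfl⟩
    · intro a ha b hb hab
      rw [hQ, Finset.coe_insert, Set.mem_insert_iff] at ha hb
      rcases ha with rfl | ha <;> rcases hb with rfl | hb
      · exact absurd rfl hab
      · obtain ⟨S', hS', rfl⟩ := Finset.mem_coe.mp hb |> Finset.mem_image.mp
        exact (hT0img S' hS').2
      · obtain ⟨S', hS', rfl⟩ := Finset.mem_coe.mp ha |> Finset.mem_image.mp
        exact ((hT0img S' hS').2).symm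
      · obtain ⟨S1, hS1, rfl⟩ := Finset.mem_coe.mp ha |> Finset.mem_image.mp
        obtain ⟨S2, hS2, rfl⟩ := Finset.mem_coe.mp hb |> Finset.mem_image.mp
        have hne12 : S1 ≠ S2 := fun h => hab (by rw [h])
        have := hP.2 (Finset.mem_coe.mpr hS1) (Finset.mem_coe.mpr hS2) hne12
        exact (Set.disjoint_image_iff fInj).mpr this
  have hQcard : Q.card = P.card + 1 := by
    rw [hQ]
    rw [Finset.card_insert_of_notMem, Finset.card_image_of_injective _ himgInj]
    intro h
    obtain ⟨S', hS', hEq⟩ := Finset.mem_image.mp h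
    exact (hT0img S' hS').1 hEq.symm
  -- conclude
  have hbddG : BddAbove {n | ∃ P : Finset (Set V), G.IsCyclePacking P ∧ P.card = n} :=
    ⟨Fintype.card (Set V), fun n ⟨P, _, hc⟩ => hc ▸ P.card_le_univ⟩
  have : Q.card ∈ {n | ∃ P : Finset (Set V), G.IsCyclePacking P ∧ P.card = n} :=
    ⟨Q, hQpack, rfl⟩
  calc G'.cp + 1 = P.card + 1 := by rw [SimpleGraph.cp, hPcard]
    _ = Q.card := hQcard.symm
    _ ≤ G.cp := le_csSup hbddG this
end

section
/- Let G be a finite simple graph, let u be a vertex of degree exactly 2 whose two neighbors a and b are not adjacent in G, and let G' be the graph obtained from G by deleting u and adding the edge ab (suppressing u). Then cp(G) = cp(G'). -/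
open SimpleGraph

namespace CPaux

open SimpleGraph Walk

variable {V : Type*}

theorem exists_split_of_mem_darts {G : SimpleGraph V} {d : G.Dart} {v w : V} {p : G.Walk v w}
    (hd : d ∈ p.darts) :
    ∃ (q : G.Walk v d.fst) (r : G.Walk d.snd w), p = q.append (Walk.cons d.adj r) := by
  induction p with
  | nil => simp [Walk.darts_nil] at hd
  | cons h p ih =>
    rw [Walk.darts_cons, List.mem_cons] at hd
    rcases hd with hd | hd
    · subst hd
      exact ⟨Walk.nil, p, rfl⟩
    · obtain ⟨q, r, hqr⟩ := ih hd
      exact ⟨Walk.cons h q, r, by rw [hqr, Walk.cons_append]⟩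

def toInduce {G : SimpleGraph V} {s : Set V} :
    ∀ {v w : V} (p : G.Walk v w) (hp : ∀ x ∈ p.support, x ∈ s),
      (G.induce s).Walk ⟨v, hp v p.start_mem_support⟩ ⟨w, hp w p.end_mem_support⟩
  | _, _, Walk.nil, _ => Walk.nil
  | _, _, Walk.cons h p, hp =>
    Walk.cons (by exact h) (toInduce p fun x hx => hp x (by simp [hx]))

theorem toInduce_map {G : SimpleGraph V} {s : Set V} {v w : V} (p : G.Walk v w)
    (hp : ∀ x ∈ p.support, x ∈ s) :
    (toInduce p hp).map (SimpleGraph.Embedding.induce s).toHom = p := by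
  induction p with
  | nil => rfl
  | cons h p ih => exact congrArg (Walk.cons h) (ih _)

theorem isCycleSupport_image {H : SimpleGraph V} {s : Set V} {S : Set ↥s}
    (h : (H.induce s).IsCycleSupport S) : H.IsCycleSupport (Subtype.val '' S) := by
  obtain ⟨v, w, hc, rfl⟩ := h
  refine ⟨v, w.map (SimpleGraph.Embedding.induce s).toHom,
    hc.map Subtype.val_injective, ?_⟩
  ext x
  constructor
  · rintro ⟨y, hy, rfl⟩
    rw [Set.mem_setOf_eq]; erw [Walk.support_map]
    exact List.mem_map_of_mem hy
  · intro hx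
    rw [Set.mem_setOf_eq] at hx; erw [Walk.support_map] at hx; rw [List.mem_map] at hx
    obtain ⟨y, hy, hyx⟩ := hx
    exact ⟨y, hy, hyx⟩

theorem isCycleSupport_preimage {H : SimpleGraph V} {s : Set V} {S : Set V}
    (h : H.IsCycleSupport S) (hSs : S ⊆ s) :
    (H.induce s).IsCycleSupport (Subtype.val ⁻¹' S) := by
  obtain ⟨v, w, hc, rfl⟩ := h
  have hp : ∀ x ∈ w.support, x ∈ s := fun x hx => hSs hx
  refine ⟨⟨v, hp v w.start_mem_support⟩, toInduce w hp, ?_, ?_⟩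
  · rw [← Walk.map_isCycle_iff_of_injective (f := (SimpleGraph.Embedding.induce s).toHom)
      Subtype.val_injective, toInduce_map]
    exact hc
  · ext x
    have hmap : (toInduce w hp).support.map (SimpleGraph.Embedding.induce (G := H) s).toHom
        = w.support := by rw [← Walk.support_map, toInduce_map]; rfl
    simp only [Set.mem_preimage, Set.mem_setOf_eq, ← hmap, List.mem_map]
    constructor
    · rintro ⟨y, hy, hyx⟩
      have : y = x := Subtype.val_injective hyx
      exact this ▸ hy
    · intro hx; exact ⟨x, hx, rfl⟩

theorem exists_adj_of_mem_support_isCycle [DecidableEq V] {H : SimpleGraph V} {v x : V}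
    {w : H.Walk v v} (hc : w.IsCycle) (hx : x ∈ w.support) : ∃ y, H.Adj x y := by
  have hcr := hc.rotate hx
  generalize w.rotate _ hx = c at hcr
  cases c with
  | nil => exact absurd rfl hcr.ne_nil
  | cons h p => exact ⟨_, h⟩

theorem nonempty_of_isCycleSupport {H : SimpleGraph V} {S : Set V}
    (h : H.IsCycleSupport S) : S.Nonempty := by
  obtain ⟨v, w, _, rfl⟩ := h
  exact ⟨v, w.start_mem_support⟩

/-- Splice `u` into an `H`-cycle that uses the edge `xy`, obtaining a `G`-cycle. -/
theorem splice {G H : SimpleGraph V} {u x y : V}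
    (hux : G.Adj u x) (huy : G.Adj u y)
    (hHedge : ∀ c d, H.Adj c d → s(c, d) = s(x, y) ∨ (G.Adj c d ∧ c ≠ u ∧ d ≠ u))
    {v : V} (w1 : H.Walk v x) (hadj : H.Adj x y) (w2 : H.Walk y v)
    (hc : (w1.append (Walk.cons hadj w2)).IsCycle)
    (hu : u ∉ (w1.append (Walk.cons hadj w2)).support) :
    G.IsCycleSupport (insert u {z | z ∈ (w1.append (Walk.cons hadj w2)).support}) := by
  set w := w1.append (Walk.cons hadj w2) with hw
  have hxy : x ≠ y := hadj.ne
  have hedges : w.edges = w1.edges ++ (s(x, y) :: w2.edges) := by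
    rw [hw, Walk.edges_append, Walk.edges_cons]
  have htrail : w.edges.Nodup := hc.isTrail.edges_nodup
  rw [hedges, List.nodup_append] at htrail
  obtain ⟨h1n, h2n', hdisj⟩ := htrail
  rw [List.nodup_cons] at h2n'
  obtain ⟨hxy1, h2n⟩ := h2n'
  have hxy2 : s(x, y) ∉ w1.edges := fun hmem => hdisj _ hmem _ List.mem_cons_self rfl
  -- edges of w1, w2 are G-edges avoiding u
  have hsub1 : ∀ e ∈ w1.edges, e ∈ G.edgeSet ∧ u ∉ e := by
    intro e he
    induction e using Sym2.ind with
    | _ c d =>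
      have hcd := w1.adj_of_mem_edges he
      rcases hHedge c d hcd with h | ⟨h, hcu, hdu⟩
      · exact absurd (h ▸ he) hxy2
      · exact ⟨h, by simp [Sym2.mem_iff]; exact ⟨fun h' => hcu h'.symm, fun h' => hdu h'.symm⟩⟩
  have hsub2 : ∀ e ∈ w2.edges, e ∈ G.edgeSet ∧ u ∉ e := by
    intro e he
    induction e using Sym2.ind with
    | _ c d =>
      have hcd := w2.adj_of_mem_edges he
      rcases hHedge c d hcd with h | ⟨h, hcu, hdu⟩
      · exact absurd (h ▸ he) hxy1
      · exact ⟨h, by simp [Sym2.mem_iff]; exact ⟨fun h' => hcu h'.symm, fun h' => hdu h'.symm⟩⟩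
  set c : G.Walk v v :=
    (w1.transfer G (fun e he => (hsub1 e he).1)).append
      (Walk.cons hux.symm (Walk.cons huy (w2.transfer G (fun e he => (hsub2 e he).1)))) with hcdef
  have hcsupp : c.support = w1.support ++ (u :: w2.support) := by
    rw [hcdef, Walk.support_append, Walk.support_cons, Walk.support_cons,
      Walk.support_transfer, Walk.support_transfer, List.tail_cons]
  have hwsupp : w.support = w1.support ++ w2.support := by
    rw [hw, Walk.support_append, Walk.support_cons, List.tail_cons]
  have hcedges : c.edges = w1.edges ++ (s(x, u) :: s(u, y) :: w2.edges) := by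
    rw [hcdef, Walk.edges_append, Walk.edges_cons, Walk.edges_cons,
      Walk.edges_transfer, Walk.edges_transfer]
  have hne : s(x, u) ≠ s(u, y) := by
    intro h
    rw [Sym2.eq_iff] at h
    rcases h with ⟨h1, _⟩ | ⟨h1, _⟩
    · exact hux.ne h1.symm
    · exact hxy h1
  have hxu1 : s(x, u) ∉ w1.edges := fun h => (hsub1 _ h).2 (Sym2.mem_mk_right x u)
  have hxu2 : s(x, u) ∉ w2.edges := fun h => (hsub2 _ h).2 (Sym2.mem_mk_right x u)
  have huy1 : s(u, y) ∉ w1.edges := fun h => (hsub1 _ h).2 (Sym2.mem_mk_left u y)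
  have huy2 : s(u, y) ∉ w2.edges := fun h => (hsub2 _ h).2 (Sym2.mem_mk_left u y)
  refine ⟨v, c, ?_, ?_⟩
  · rw [Walk.isCycle_def]
    refine ⟨?_, ?_, ?_⟩
    · rw [Walk.isTrail_def, hcedges, List.nodup_append, List.nodup_cons, List.nodup_cons]
      refine ⟨h1n, ⟨by simp [hne, hxu2], by simp [huy2], h2n⟩, ?_⟩
      intro e he e' hmem hee
      subst hee
      rcases List.mem_cons.mp hmem with h | hmem2
      · exact hxu1 (h ▸ he)
      rcases List.mem_cons.mp hmem2 with h | h2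
      · exact huy1 (h ▸ he)
      · exact hdisj _ he _ (List.mem_cons_of_mem _ h2) rfl
    · intro hnil
      have := congrArg Walk.length hnil
      simp [hcdef, Walk.length_append, Walk.length_cons] at this
    · have hwtail : w.support.tail = w1.support.tail ++ w2.support := by
        rw [hwsupp, Walk.support_eq_cons w1, List.cons_append, List.tail_cons]
        simp
      have hwn : (w1.support.tail ++ w2.support).Nodup := hwtail ▸ hc.support_nodup
      have hun : u ∉ w1.support.tail ++ w2.support := by
        intro hmem
        apply hu
        rw [hwsupp]
        rcases List.mem_append.mp hmem with h | h
        · exact List.mem_append.mpr (Or.inl (List.mem_of_mem_tail h))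
        · exact List.mem_append.mpr (Or.inr h)
      have : c.support.tail = w1.support.tail ++ (u :: w2.support) := by
        rw [hcsupp, Walk.support_eq_cons w1, List.cons_append, List.tail_cons]
        simp
      rw [this, List.nodup_middle, List.nodup_cons]
      exact ⟨hun, hwn⟩
  · ext z
    simp only [Set.mem_insert_iff, Set.mem_setOf_eq, hcsupp, hwsupp, List.mem_append,
      List.mem_cons]
    tauto

theorem surgery1 {G H : SimpleGraph V} {u a b : V}
    (hnbr : ∀ x, G.Adj u x ↔ x = a ∨ x = b)
    (hnadj : ¬ G.Adj a b)
    (hle : ∀ c d, G.Adj c d → c ≠ u → d ≠ u → H.Adj c d)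
    (hab' : H.Adj a b)
    {w : G.Walk u u} (hc : w.IsCycle) :
    H.IsCycleSupport ({z | z ∈ w.support} \ {u}) := by
  cases w with
  | nil => exact absurd rfl hc.ne_nil
  | @cons _ x _ h p =>
    cases hrev : p.reverse with
    | nil => exact absurd rfl h.ne
    | @cons _ y _ h2 r =>
      have hp : p = r.reverse.append (Walk.cons h2.symm Walk.nil) := by
        rw [← Walk.reverse_reverse p, hrev, Walk.reverse_cons]
      subst hp
      set q := r.reverse with hqdef
      have hsupp : (Walk.cons h (q.append (Walk.cons h2.symm Walk.nil))).support
          = u :: (q.support ++ [u]) := by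
        simp [Walk.support_append]
      have hedges : (Walk.cons h (q.append (Walk.cons h2.symm Walk.nil))).edges
          = s(u, x) :: (q.edges ++ [s(y, u)]) := by
        simp [Walk.edges_append]
      rw [Walk.isCycle_def] at hc
      obtain ⟨ht, -, hsn⟩ := hc
      rw [Walk.isTrail_def, hedges, List.nodup_cons, List.nodup_append] at ht
      obtain ⟨hux_mem, hqen, -, hdisj⟩ := ht
      rw [Walk.support_cons, List.tail_cons, Walk.support_append] at hsn
      simp only [Walk.support_cons, Walk.support_nil, List.tail_cons] at hsn
      rw [List.nodup_append] at hsn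
      obtain ⟨hqn, -, hdisj2⟩ := hsn
      have huq : u ∉ q.support := fun hm => hdisj2 _ hm _ (List.mem_singleton_self u) rfl
      have hne_xy : x ≠ y := by
        intro hxy
        apply hux_mem
        rw [List.mem_append]
        right
        rw [List.mem_singleton, hxy, Sym2.eq_swap]
      have hx : x = a ∨ x = b := (hnbr x).mp h
      have hy : y = a ∨ y = b := (hnbr y).mp h2
      have hyx_adj : H.Adj y x := by
        rcases hx with rfl | rfl <;> rcases hy with rfl | rfl
        · exact absurd rfl hne_xy.symm
        · exact hab'.symm
        · exact hab'
        · exact absurd rfl hne_xy.symm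
      have hq_edges : ∀ e ∈ q.edges, e ∈ H.edgeSet := by
        intro e he
        induction e using Sym2.ind with
        | _ c d =>
          have hcd := q.adj_of_mem_edges he
          have hcs := q.fst_mem_support_of_mem_edges he
          have hds := q.snd_mem_support_of_mem_edges he
          exact (H.mem_edgeSet).mpr
            (hle c d hcd (fun hcu => huq (hcu ▸ hcs)) (fun hdu => huq (hdu ▸ hds)))
      set c : H.Walk x x := (q.transfer H hq_edges).append (Walk.cons hyx_adj Walk.nil)
        with hcdef
      have hcsupp : c.support = q.support ++ [x] := by
        simp [hcdef, Walk.support_append, Walk.support_transfer]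
      have hcedges : c.edges = q.edges ++ [s(y, x)] := by
        simp [hcdef, Walk.edges_append, Walk.edges_transfer]
      have hyxq : s(y, x) ∉ q.edges := by
        intro hm
        have := q.adj_of_mem_edges hm
        rcases hx with rfl | rfl <;> rcases hy with rfl | rfl
        · exact hne_xy rfl
        · exact hnadj this.symm
        · exact hnadj this
        · exact hne_xy rfl
      refine ⟨x, c, ?_, ?_⟩
      · rw [Walk.isCycle_def]
        refine ⟨?_, ?_, ?_⟩
        · rw [Walk.isTrail_def, hcedges, List.nodup_append]
          exact ⟨hqen, List.nodup_singleton _, by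
            intro e he e' hm hee
            rw [List.mem_singleton] at hm
            subst hee
            exact hyxq (hm ▸ he)⟩
        · intro hnil
          have := congrArg Walk.length hnil
          simp [hcdef, Walk.length_append] at this
        · rw [hcsupp, Walk.support_eq_cons q, List.cons_append, List.tail_cons]
          rw [List.nodup_append]
          rw [Walk.support_eq_cons q, List.nodup_cons] at hqn
          refine ⟨hqn.2, List.nodup_singleton _, ?_⟩
          intro z hz z' hm hzz
          subst hzz
          rw [List.mem_singleton] at hm
          exact hqn.1 (hm ▸ hz)
      · have hxq : x ∈ q.support := q.start_mem_support
        ext z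
        rw [hsupp]
        simp only [Set.mem_diff, Set.mem_setOf_eq, Set.mem_singleton_iff, hcsupp,
          List.mem_cons, List.mem_append, List.mem_singleton, List.mem_nil_iff, or_false]
        constructor
        · rintro ⟨h1 | h1 | h1, h2⟩
          · exact absurd h1 h2
          · exact Or.inl h1
          · exact absurd h1 h2
        · rintro (h1 | h1)
          · exact ⟨Or.inr (Or.inl h1), fun hz => huq (hz ▸ h1)⟩
          · exact ⟨Or.inr (Or.inl (h1 ▸ hxq)), fun hz => huq (hz ▸ h1 ▸ hxq)⟩

theorem mem_support_iff_mem_tail {H : SimpleGraph V} {v z : V} {w : H.Walk v v}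
    (hnn : ¬ w.Nil) : z ∈ w.support ↔ z ∈ w.support.tail := by
  cases w with
  | nil => exact absurd Walk.nil_nil hnn
  | cons h p =>
    rw [Walk.support_cons, List.tail_cons, List.mem_cons]
    constructor
    · rintro (rfl | hz)
      · exact p.end_mem_support
      · exact hz
    · exact Or.inr

theorem support_set_rotate [DecidableEq V] {H : SimpleGraph V} {v u : V} {w : H.Walk v v}
    (hu : u ∈ w.support) (hnn : ¬ w.Nil) :
    {z | z ∈ (w.rotate u hu).support} = {z | z ∈ w.support} := by
  have honn : ¬ (w.rotate u hu).Nil := by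
    intro h
    rw [Walk.nil_iff_length_eq] at h hnn
    apply hnn
    have := (w.rotate_darts _ hu).perm.length_eq
    rw [Walk.length_darts, Walk.length_darts, h] at this
    exact this.symm
  ext z
  rw [Set.mem_setOf_eq, Set.mem_setOf_eq, mem_support_iff_mem_tail honn,
    mem_support_iff_mem_tail hnn]
  exact (w.support_rotate _ hu).perm.mem_iff

theorem packing_map {V₁ V₂ : Type*} [DecidableEq (Set V₂)] {G₁ : SimpleGraph V₁}
    {G₂ : SimpleGraph V₂} (f : Set V₁ → Set V₂)
    (hsupp : ∀ S, G₁.IsCycleSupport S → G₂.IsCycleSupport (f S))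
    (hdisj : ∀ S T, G₁.IsCycleSupport S → G₁.IsCycleSupport T → Disjoint S T →
      Disjoint (f S) (f T))
    (P : Finset (Set V₁)) (hP : G₁.IsCyclePacking P) :
    G₂.IsCyclePacking (P.image f) ∧ (P.image f).card = P.card := by
  obtain ⟨hPs, hPd⟩ := hP
  have hinj : Set.InjOn f ↑P := by
    intro S hS T hT hST
    by_contra hne
    have hd := hdisj S T (hPs S hS) (hPs T hT) (hPd hS hT hne)
    rw [hST, disjoint_self] at hd
    have hne2 := nonempty_of_isCycleSupport (hsupp T (hPs T hT))
    rw [hd] at hne2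
    exact Set.not_nonempty_empty hne2
  refine ⟨⟨?_, ?_⟩, Finset.card_image_of_injOn hinj⟩
  · intro S hS
    obtain ⟨T, hT, rfl⟩ := Finset.mem_image.mp hS
    exact hsupp T (hPs T hT)
  · intro S hS T hT hne
    rw [Finset.coe_image] at hS hT
    obtain ⟨S', hS', rfl⟩ := hS
    obtain ⟨T', hT', rfl⟩ := hT
    have hne' : S' ≠ T' := fun h => hne (by rw [h])
    exact hdisj S' T' (hPs S' hS') (hPs T' hT') (hPd hS' hT' hne')

theorem cp_le_of_maps {V₁ V₂ : Type*} [Fintype V₂] {G₁ : SimpleGraph V₁}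
    {G₂ : SimpleGraph V₂} (f : Set V₁ → Set V₂)
    (hsupp : ∀ S, G₁.IsCycleSupport S → G₂.IsCycleSupport (f S))
    (hdisj : ∀ S T, G₁.IsCycleSupport S → G₁.IsCycleSupport T → Disjoint S T →
      Disjoint (f S) (f T)) :
    G₁.cp ≤ G₂.cp := by
  classical
  apply csSup_le_csSup
  · refine ⟨Fintype.card (Set V₂), ?_⟩
    rintro n ⟨Q, -, rfl⟩
    exact Q.card_le_univ.trans (le_of_eq Finset.card_univ)
  · exact ⟨0, ∅, ⟨by simp, by simp⟩, rfl⟩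
  · rintro n ⟨P, hP, rfl⟩
    obtain ⟨hQ, hcard⟩ := packing_map f hsupp hdisj P hP
    exact ⟨P.image f, hQ, hcard⟩

theorem cycleSupport_GH [DecidableEq V] {G H : SimpleGraph V} {u a b : V}
    (hnbr : ∀ x, G.Adj u x ↔ x = a ∨ x = b)
    (hnadj : ¬ G.Adj a b)
    (hle : ∀ c d, G.Adj c d → c ≠ u → d ≠ u → H.Adj c d)
    (hab' : H.Adj a b)
    {S : Set V} (hS : G.IsCycleSupport S) : H.IsCycleSupport (S \ {u}) := by
  obtain ⟨v, w, hc, rfl⟩ := hS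
  by_cases hu : u ∈ w.support
  · have hc' := hc.rotate hu
    have hset := support_set_rotate hu hc.not_nil
    have := surgery1 hnbr hnadj hle hab' hc'
    rwa [hset] at this
  · have hedges : ∀ e ∈ w.edges, e ∈ H.edgeSet := by
      intro e he
      induction e using Sym2.ind with
      | _ c d =>
        have hcd := w.adj_of_mem_edges he
        have hcs := w.fst_mem_support_of_mem_edges he
        have hds := w.snd_mem_support_of_mem_edges he
        exact (H.mem_edgeSet).mpr
          (hle c d hcd (fun h => hu (h ▸ hcs)) (fun h => hu (h ▸ hds)))
    have hSu : ({z | z ∈ w.support} : Set V) \ {u} = {z | z ∈ w.support} :=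
      Set.diff_singleton_eq_self hu
    rw [hSu]
    exact ⟨v, w.transfer H hedges, hc.transfer hedges, by rw [Walk.support_transfer]⟩

theorem surgery2_aux {G H : SimpleGraph V} {u x y : V}
    (hux : G.Adj u x) (huy : G.Adj u y)
    (hHedge : ∀ c d, H.Adj c d → s(c, d) = s(x, y) ∨ (G.Adj c d ∧ c ≠ u ∧ d ≠ u))
    {v : V} {w : H.Walk v v} (hc : w.IsCycle) (hu : u ∉ w.support)
    {d : H.Dart} (hd : d ∈ w.darts) (h1 : d.fst = x) (h2 : d.snd = y) :
    G.IsCycleSupport (insert u {z | z ∈ w.support}) := by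
  subst h1 h2
  obtain ⟨w1, r, hsplit⟩ := exists_split_of_mem_darts hd
  rw [hsplit] at hc hu ⊢
  exact splice hux huy hHedge w1 d.adj r hc hu

theorem surgery2 [DecidableEq V] {G H : SimpleGraph V} {u a b : V}
    (hua : G.Adj u a) (hub : G.Adj u b)
    (hHedge : ∀ c d, H.Adj c d → s(c, d) = s(a, b) ∨ (G.Adj c d ∧ c ≠ u ∧ d ≠ u))
    {S : Set V} (hS : H.IsCycleSupport S) :
    u ∉ S ∧ (G.IsCycleSupport S ∨ (a ∈ S ∧ b ∈ S ∧ G.IsCycleSupport (insert u S))) := by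
  obtain ⟨v, w, hc, rfl⟩ := hS
  have hu : u ∉ w.support := by
    intro hu
    obtain ⟨y, hy⟩ := exists_adj_of_mem_support_isCycle hc hu
    rcases hHedge u y hy with h | ⟨-, hne, -⟩
    · rw [Sym2.eq_iff] at h
      rcases h with ⟨h1, -⟩ | ⟨h1, -⟩
      · exact hua.ne h1
      · exact hub.ne h1
    · exact hne rfl
  refine ⟨hu, ?_⟩
  by_cases hab_mem : s(a, b) ∈ w.edges
  · right
    refine ⟨w.fst_mem_support_of_mem_edges hab_mem,
      w.snd_mem_support_of_mem_edges hab_mem, ?_⟩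
    have hmm : s(a, b) ∈ w.darts.map Dart.edge := hab_mem
    obtain ⟨d, hd, hde⟩ := List.mem_map.mp hmm
    have hde' : s(d.fst, d.snd) = s(a, b) := hde
    rw [Sym2.eq_iff] at hde'
    rcases hde' with ⟨h1, h2⟩ | ⟨h1, h2⟩
    · exact surgery2_aux hua hub hHedge hc hu hd h1 h2
    · refine surgery2_aux hub hua (fun c e h => ?_) hc hu hd h1 h2
      rcases hHedge c e h with h' | h'
      · exact Or.inl (h'.trans Sym2.eq_swap)
      · exact Or.inr h'
  · left
    have hedges : ∀ e ∈ w.edges, e ∈ G.edgeSet := by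
      intro e he
      induction e using Sym2.ind with
      | _ c d =>
        rcases hHedge c d (w.adj_of_mem_edges he) with h | ⟨h, -, -⟩
        · exact absurd (h ▸ he) hab_mem
        · exact h
    exact ⟨v, w.transfer G hedges, hc.transfer hedges, by rw [Walk.support_transfer]⟩

end CPaux

open CPaux in
theorem cp_suppress_degreeTwo {V : Type*} [Fintype V] [DecidableEq V]
    (G : SimpleGraph V) [DecidableRel G.Adj] (u a b : V)
    (hdeg : G.degree u = 2) (hua : G.Adj u a) (hub : G.Adj u b) (hab : a ≠ b)
    (hnadj : ¬ G.Adj a b) :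
    G.cp = ((G.induce {v | v ≠ u}) ⊔
      SimpleGraph.fromEdgeSet {s((⟨a, hua.ne'⟩ : {v : V // v ≠ u}), ⟨b, hub.ne'⟩)}).cp := by
  classical
  set H : SimpleGraph V := SimpleGraph.fromEdgeSet ((G.edgeSet \ {e | u ∈ e}) ∪ {s(a, b)})
    with hHdef
  have hnbr : ∀ x, G.Adj u x ↔ x = a ∨ x = b := by
    have hsub : ({a, b} : Finset V) ⊆ G.neighborFinset u := by
      intro x hx
      rcases Finset.mem_insert.mp hx with rfl | hx
      · exact (G.mem_neighborFinset u x).mpr hua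
      · rw [Finset.mem_singleton] at hx
        subst hx
        exact (G.mem_neighborFinset u x).mpr hub
    have heq : G.neighborFinset u = {a, b} :=
      (Finset.eq_of_subset_of_card_le hsub (by rw [Finset.card_pair hab]; exact hdeg.le)).symm
    intro x
    rw [← SimpleGraph.mem_neighborFinset, heq]
    simp
  have hHadj : ∀ c d, H.Adj c d ↔
      (s(c, d) = s(a, b) ∨ (G.Adj c d ∧ c ≠ u ∧ d ≠ u)) ∧ c ≠ d := by
    intro c d
    rw [hHdef, SimpleGraph.fromEdgeSet_adj]
    constructor
    · rintro ⟨hm, hne⟩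
      refine ⟨?_, hne⟩
      rcases hm with ⟨hm, hmu⟩ | hm
      · right
        simp only [Set.mem_setOf_eq, Sym2.mem_iff, not_or] at hmu
        exact ⟨(G.mem_edgeSet).mp hm, fun h => hmu.1 h.symm, fun h => hmu.2 h.symm⟩
      · exact Or.inl hm
    · rintro ⟨hm | ⟨hadj, hcu, hdu⟩, hne⟩
      · exact ⟨Or.inr hm, hne⟩
      · refine ⟨Or.inl ⟨(G.mem_edgeSet).mpr hadj, ?_⟩, hne⟩
        simp only [Set.mem_setOf_eq, Sym2.mem_iff, not_or]
        exact ⟨fun h => hcu h.symm, fun h => hdu h.symm⟩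
  have hle : ∀ c d, G.Adj c d → c ≠ u → d ≠ u → H.Adj c d :=
    fun c d h hc hd => (hHadj c d).mpr ⟨Or.inr ⟨h, hc, hd⟩, h.ne⟩
  have hab' : H.Adj a b := (hHadj a b).mpr ⟨Or.inl rfl, hab⟩
  have hHedge : ∀ c d, H.Adj c d → s(c, d) = s(a, b) ∨ (G.Adj c d ∧ c ≠ u ∧ d ≠ u) :=
    fun c d h => ((hHadj c d).mp h).1
  have hEq : (G.induce {v | v ≠ u}) ⊔
      SimpleGraph.fromEdgeSet {s((⟨a, hua.ne'⟩ : {v : V // v ≠ u}), ⟨b, hub.ne'⟩)}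
      = H.induce {v | v ≠ u} := by
    ext ⟨x, hx⟩ ⟨y, hy⟩
    simp only [SimpleGraph.sup_adj, SimpleGraph.comap_adj, Function.Embedding.coe_subtype,
      SimpleGraph.fromEdgeSet_adj, Set.mem_singleton_iff, Sym2.eq_iff, Subtype.mk.injEq,
      ne_eq]
    rw [hHadj x y, Sym2.eq_iff]
    have h1 : G.Adj x y → x ≠ y := Adj.ne
    have h2 : a ≠ b := hab
    tauto
  have e1 : G.cp ≤ H.cp :=
    cp_le_of_maps (fun S => S \ {u})
      (fun S hS => cycleSupport_GH hnbr hnadj hle hab' hS)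
      (fun S T _ _ hST => hST.mono Set.diff_subset Set.diff_subset)
  have e2 : H.cp ≤ G.cp := by
    apply cp_le_of_maps (fun S => if G.IsCycleSupport S then S else insert u S)
    · intro S hS
      by_cases h : G.IsCycleSupport S
      · simpa [h] using h
      · rcases surgery2 hua hub hHedge hS with ⟨-, hor⟩
        rcases hor with h' | ⟨-, -, h'⟩
        · exact absurd h' h
        · simpa [h] using h'
    · intro S T hSsup hTsup hST
      have hprops : ∀ S, H.IsCycleSupport S →
          (if G.IsCycleSupport S then S else insert u S) ⊆ insert u S ∧
          (u ∈ (if G.IsCycleSupport S then S else insert u S) → a ∈ S) := by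
        intro S hS
        rcases surgery2 hua hub hHedge hS with ⟨huS, hor⟩
        by_cases h : G.IsCycleSupport S
        · exact ⟨by simp [h, Set.subset_insert], fun hu => absurd (by simpa [h] using hu) huS⟩
        · rcases hor with h' | ⟨ha, -, -⟩
          · exact absurd h' h
          · exact ⟨by simp [h], fun _ => ha⟩
      obtain ⟨hSsub, hSa⟩ := hprops S hSsup
      obtain ⟨hTsub, hTa⟩ := hprops T hTsup
      rw [Set.disjoint_left]
      intro z hzS hzT
      by_cases hz : z = u
      · subst hz
        exact Set.disjoint_left.mp hST (hSa hzS) (hTa hzT)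
      · have h1 : z ∈ S := by
          rcases Set.mem_insert_iff.mp (hSsub hzS) with h | h
          · exact absurd h hz
          · exact h
        have h2 : z ∈ T := by
          rcases Set.mem_insert_iff.mp (hTsub hzT) with h | h
          · exact absurd h hz
          · exact h
        exact Set.disjoint_left.mp hST h1 h2
  letI : Fintype ↥({v : V | v ≠ u}) := Fintype.ofFinite _
  have e3 : (H.induce {v | v ≠ u}).cp ≤ H.cp :=
    cp_le_of_maps (fun S => Subtype.val '' S)
      (fun S hS => isCycleSupport_image hS)
      (fun S T _ _ hST => (Set.disjoint_image_iff Subtype.val_injective).mpr hST)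
  have e4 : H.cp ≤ (H.induce {v | v ≠ u}).cp :=
    cp_le_of_maps (fun S => Subtype.val ⁻¹' S)
      (fun S hS => isCycleSupport_preimage hS
        (fun z hz hzu => (surgery2 hua hub hHedge hS).1 (hzu ▸ hz)))
      (fun S T _ _ hST => hST.preimage _)
  rw [hEq]
  exact le_antisymm (e1.trans e4) (e3.trans e2)
end

section
/- Let G be a finite simple graph, let u be a vertex of degree exactly 2 whose two neighbors a and b are not adjacent in G, and let G' be the graph obtained from G by deleting u and adding the edge ab (suppressing u). Then fvs(G) = fvs(G'). -/
open SimpleGraph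

namespace FvsAux

variable {V : Type*}

lemma exists_walk_induce (G : SimpleGraph V) (T : Set V) :
    ∀ {x y : V} (q : G.Walk x y) (hx : x ∈ T) (hy : y ∈ T),
    (∀ z ∈ q.support, z ∈ T) →
    ∃ q' : (G.induce T).Walk ⟨x, hx⟩ ⟨y, hy⟩, q'.map (Embedding.induce T).toHom = q
  | x, _, Walk.nil, hx, hy, _ => ⟨Walk.nil, rfl⟩
  | x, y, Walk.cons (v := z) h p, hx, hy, hq => by
    have hz : z ∈ T := hq _ (by simp)
    obtain ⟨p', hp'⟩ := exists_walk_induce G T p hz hy (fun w hw => hq w (by simp [hw]))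
    exact ⟨Walk.cons (by simpa using h) p', by rw [Walk.map_cons, hp']; rfl⟩

lemma induce_isAcyclic_iff (G : SimpleGraph V) (T : Set V) :
    (G.induce T).IsAcyclic ↔ ∀ (v : V) (c : G.Walk v v), c.IsCycle → ∃ x ∈ c.support, x ∉ T := by
  constructor
  · intro hA v c hc
    by_contra hcon
    push_neg at hcon
    have hv : v ∈ T := hcon v c.start_mem_support
    obtain ⟨c', hc'⟩ := exists_walk_induce G T c hv hv hcon
    refine hA c' ?_
    have : (c'.map (Embedding.induce T).toHom).IsCycle := hc' ▸ hc
    exact (Walk.map_isCycle_iff_of_injective (by exact Subtype.val_injective)).mp this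
  · intro h v c hc
    obtain ⟨x, hx, hxT⟩ := h v (c.map (Embedding.induce T).toHom)
      (hc.map (by exact Subtype.val_injective))
    replace hx : x ∈ (c.map (Embedding.induce T).toHom).support := hx
    rw [Walk.support_map, List.mem_map] at hx
    obtain ⟨x', _, rfl⟩ := hx
    exact hxT x'.2


variable {V : Type*}

lemma mem_support_of_rotate [DecidableEq V] {G : SimpleGraph V} {v x : V} (c : G.Walk v v) (hx : x ∈ c.support)
    {z : V} (hz : z ∈ (c.rotate x hx).support) : z ∈ c.support := by
  rcases List.mem_cons.mp ((c.rotate x hx).support_eq_cons ▸ hz) with rfl | hz'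
  · exact hx
  · have := (Walk.support_rotate c x hx).mem_iff.mp hz'
    have hsub : c.support.tail ⊆ c.support := by
      rw [c.support_eq_cons]; exact List.subset_cons_self _ _
    exact hsub this

lemma cycle_edge_path [DecidableEq V] {G : SimpleGraph V} {v x y : V} (c : G.Walk v v)
    (hc : c.IsCycle) (he : s(x, y) ∈ c.edges) :
    ∃ p : G.Walk y x, p.IsPath ∧ s(x, y) ∉ p.edges ∧ ∀ z ∈ p.support, z ∈ c.support := by
  have hx : x ∈ c.support := c.fst_mem_support_of_mem_edges he
  have hxy : x ≠ y := (c.adj_of_mem_edges he).ne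
  set d := c.rotate x hx with hd_def
  have hd : d.IsCycle := hc.rotate hx
  have hde : s(x, y) ∈ d.edges := (c.rotate_edges x hx).mem_iff.mpr he
  have hdsupp : ∀ z ∈ d.support, z ∈ c.support := fun z hz => mem_support_of_rotate c hx hz
  obtain ⟨z, hxz, q, hdq⟩ := Walk.not_nil_iff.mp hd.not_nil
  rw [hdq] at hd hde hdsupp
  obtain ⟨hq_path, hq_edge⟩ := (Walk.cons_isCycle_iff q hxz).mp hd
  rw [Walk.edges_cons, List.mem_cons] at hde
  rcases hde with heq | hmem
  · -- first edge is the edge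
    have hyz : y = z := by
      rcases Sym2.eq_iff.mp heq with ⟨-, h2⟩ | ⟨h1, -⟩
      · exact h2
      · exact absurd h1 hxz.ne
    subst hyz
    exact ⟨q, hq_path, heq ▸ hq_edge, fun w hw => hdsupp w (by simp [hw])⟩
  · -- edge is inside q
    have hy_q : y ∈ q.support := q.snd_mem_support_of_mem_edges hmem
    set r := q.takeUntil y hy_q with hr_def
    have hr_path : r.IsPath := hq_path.takeUntil hy_q
    have hx_not_r : x ∉ r.support := by
      intro hxr
      have hspec := q.take_spec hy_q
      have hnodup : q.support.Nodup := hq_path.support_nodup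
      rw [← hspec, Walk.support_append, List.nodup_append] at hnodup
      have hx_drop : x ∈ (q.dropUntil y hy_q).support.tail := by
        have hxd : x ∈ (q.dropUntil y hy_q).support := Walk.end_mem_support _
        rcases List.mem_cons.mp ((q.dropUntil y hy_q).support_eq_cons ▸ hxd) with rfl | h
        · exact absurd rfl hxy
        · exact h
      exact hnodup.2.2 x hxr x hx_drop rfl
    refine ⟨r.reverse.concat hxz.symm, ?_, ?_, ?_⟩
    · rw [Walk.isPath_def, Walk.support_concat, Walk.support_reverse]
      rw [List.nodup_append]
      refine ⟨List.nodup_reverse.mpr hr_path.support_nodup, List.nodup_singleton _, ?_⟩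
      intro w hw w' hw' hww'; subst hww'
      rw [List.mem_singleton] at hw'
      subst hw'
      exact hx_not_r (List.mem_reverse.mp hw)
    · rw [Walk.edges_concat, List.concat_eq_append, List.mem_append]
      rintro (h1 | h2)
      · rw [Walk.edges_reverse, List.mem_reverse] at h1
        exact hx_not_r (r.fst_mem_support_of_mem_edges h1)
      · rw [List.mem_singleton] at h2
        rcases Sym2.eq_iff.mp h2 with ⟨h3, -⟩ | ⟨-, h4⟩
        · exact hxz.ne h3
        · exact hq_edge (h4 ▸ hmem)
    · intro w hw
      rw [Walk.support_concat, List.mem_append, Walk.support_reverse,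
        List.mem_reverse] at hw
      rcases hw with hw | hw
      · exact hdsupp w (by simp [q.support_takeUntil_subset hy_q hw])
      · rw [List.mem_singleton] at hw
        subst hw; exact hdsupp w (by simp)


variable {V : Type*}

lemma adj_eq_of_degree_two [Fintype V] [DecidableEq V] {G : SimpleGraph V} [DecidableRel G.Adj]
    {u a b : V} (hdeg : G.degree u = 2) (hua : G.Adj u a) (hub : G.Adj u b) (hab : a ≠ b)
    {z : V} (hz : G.Adj u z) : z = a ∨ z = b := by
  have h1 : ({a, b} : Finset V) ⊆ G.neighborFinset u := by
    intro x hx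
    rw [mem_neighborFinset]
    rcases Finset.mem_insert.mp hx with rfl | hx'
    · exact hua
    · rw [Finset.mem_singleton] at hx'; subst hx'; exact hub
  have h2 : ({a, b} : Finset V).card = 2 := by
    rw [Finset.card_insert_of_notMem (by simpa using hab), Finset.card_singleton]
  have heq : ({a, b} : Finset V) = G.neighborFinset u := by
    apply Finset.eq_of_subset_of_card_le h1
    rw [h2, ← hdeg, card_neighborFinset_eq_degree]
  have hz' : z ∈ G.neighborFinset u := (mem_neighborFinset _ _ _).mpr hz
  rw [← heq] at hz'
  simpa using hz'

lemma surgeryA [Fintype V] [DecidableEq V] {G : SimpleGraph V} [DecidableRel G.Adj]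
    {u a b : V} (hdeg : G.degree u = 2) (hua : G.Adj u a) (hub : G.Adj u b) (hab : a ≠ b)
    {v : V} (c : G.Walk v v) (hc : c.IsCycle) (hu : u ∈ c.support) :
    ∃ p : G.Walk a b, p.IsPath ∧ u ∉ p.support ∧ ∀ z ∈ p.support, z ∈ c.support := by
  have hdsupp : ∀ z ∈ (c.rotate u hu).support, z ∈ c.support := fun z hz =>
    mem_support_of_rotate c hu hz
  set d := c.rotate u hu with hd_def
  have hd : d.IsCycle := hc.rotate hu
  obtain ⟨z, huz, q, hdq⟩ := Walk.not_nil_iff.mp hd.not_nil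
  rw [hdq] at hd hdsupp
  obtain ⟨hq_path, hq_edge⟩ := (Walk.cons_isCycle_iff q huz).mp hd
  have hqrev_nil : ¬ q.reverse.Nil := Walk.not_nil_of_ne huz.ne
  obtain ⟨w, huw, r, hqr⟩ := Walk.not_nil_iff.mp hqrev_nil
  have hr_path : r.IsPath := by
    have : q.reverse.IsPath := hq_path.reverse
    rw [hqr] at this
    exact this.of_cons
  have hu_not_r : u ∉ r.support := by
    have : q.reverse.IsPath := hq_path.reverse
    rw [hqr, Walk.cons_isPath_iff] at this
    exact this.2
  have hweq : s(u, w) ∈ q.edges := by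
    have : s(u, w) ∈ q.reverse.edges := by rw [hqr]; simp
    rwa [Walk.edges_reverse, List.mem_reverse] at this
  have hwz : w ≠ z := by
    rintro rfl
    exact hq_edge hweq
  have hr_sub : ∀ x ∈ r.support, x ∈ c.support := by
    intro x hxr
    have : x ∈ q.reverse.support := by rw [hqr]; simp [hxr]
    rw [Walk.support_reverse, List.mem_reverse] at this
    exact hdsupp x (by simp [this])
  rcases adj_eq_of_degree_two hdeg hua hub hab huz with rfl | rfl <;>
    rcases adj_eq_of_degree_two hdeg hua hub hab huw with rfl | rfl
  · exact absurd rfl hwz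
  · -- z = a, w = b : r : Walk b a, take reverse
    refine ⟨r.reverse, hr_path.reverse, ?_, ?_⟩
    · rwa [Walk.support_reverse, List.mem_reverse]
    · intro x hxr
      rw [Walk.support_reverse, List.mem_reverse] at hxr
      exact hr_sub x hxr
  · -- z = b, w = a : r : Walk a b
    exact ⟨r, hr_path, hu_not_r, hr_sub⟩
  · exact absurd rfl hwz


variable {V : Type*}

lemma mapLe_support {G H : SimpleGraph V} (hle : G ≤ H) {x y : V} (p : G.Walk x y) :
    (p.mapLe hle).support = p.support := by
  induction p with
  | nil => rfl
  | cons h p ih => simpa using ih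

lemma mapLe_edges {G H : SimpleGraph V} (hle : G ≤ H) {x y : V} (p : G.Walk x y) :
    (p.mapLe hle).edges = p.edges := by
  induction p with
  | nil => rfl
  | cons h p ih => simpa using ih


end FvsAux

open FvsAux

theorem fvs_suppress_degreeTwo {V : Type*} [Fintype V] [DecidableEq V]
    (G : SimpleGraph V) [DecidableRel G.Adj] (u a b : V)
    (hdeg : G.degree u = 2) (hua : G.Adj u a) (hub : G.Adj u b) (hab : a ≠ b)
    (hnadj : ¬ G.Adj a b) :
    G.fvs = ((G.induce {v | v ≠ u}) ⊔
      SimpleGraph.fromEdgeSet {s((⟨a, hua.ne'⟩ : {v : V // v ≠ u}), ⟨b, hub.ne'⟩)}).fvs := by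
  classical
  set a' : {v : V // v ≠ u} := ⟨a, hua.ne'⟩ with ha'
  set b' : {v : V // v ≠ u} := ⟨b, hub.ne'⟩ with hb'
  set G' := (G.induce {v | v ≠ u}) ⊔ SimpleGraph.fromEdgeSet {s(a', b')} with hG'
  have ha'b' : a' ≠ b' := fun h => hab (congrArg Subtype.val h)
  have hG'ab : G'.Adj a' b' := by
    rw [hG', sup_adj]
    exact Or.inr ((fromEdgeSet_adj _).mpr ⟨rfl, ha'b'⟩)
  have hEdge : ∀ {x y : {v : V // v ≠ u}} (p : G'.Walk x y), s(a', b') ∉ p.edges →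
      ∀ e ∈ p.edges, e ∈ (G.induce {v | v ≠ u}).edgeSet := by
    intro x y p hne e he
    have h1 : e ∈ G'.edgeSet := p.edges_subset_edgeSet he
    rw [hG', edgeSet_sup] at h1
    rcases h1 with h1 | h1
    · exact h1
    · rw [edgeSet_fromEdgeSet] at h1
      exact absurd (h1.1 ▸ he) hne
  have hne1 : {n | ∃ S : Finset V, (G.induce {v | v ∉ S}).IsAcyclic ∧ S.card = n}.Nonempty := by
    refine ⟨Finset.univ.card, Finset.univ, ?_, rfl⟩
    intro v c hc
    exact absurd (Finset.mem_univ (↑v : V)) v.2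
  have hne2 : {n | ∃ S : Finset {v : V // v ≠ u},
      (G'.induce {v | v ∉ S}).IsAcyclic ∧ S.card = n}.Nonempty := by
    refine ⟨Finset.univ.card, Finset.univ, ?_, rfl⟩
    intro v c hc
    exact absurd (Finset.mem_univ v.1) v.2
  apply le_antisymm
  · -- G.fvs ≤ G'.fvs
    obtain ⟨S', hS'ac, hS'card⟩ := Nat.sInf_mem hne2
    have hhit' := (induce_isAcyclic_iff G' _).mp hS'ac
    replace hhit' : ∀ (v : {v : V // v ≠ u}) (c : G'.Walk v v), c.IsCycle → ∃ x ∈ c.support, x ∈ S' := fun v c hc => by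
      obtain ⟨x, hx, hxS⟩ := hhit' v c hc; exact ⟨x, hx, not_not.mp hxS⟩
    have hAc : (G.induce {v | v ∉ S'.image Subtype.val}).IsAcyclic := by
      rw [induce_isAcyclic_iff]
      intro v c hc
      simp only [Set.mem_setOf_eq, not_not]
      by_cases hu : u ∈ c.support
      · obtain ⟨p, hp_path, hp_u, hp_sub⟩ := surgeryA hdeg hua hub hab c hc hu
        obtain ⟨p₀, hp₀⟩ := exists_walk_induce G {v | v ≠ u} p hua.ne' hub.ne'
          (fun z hz h => hp_u (h ▸ hz))
        have hp₀path : p₀.IsPath := Walk.IsPath.of_map (f := (Embedding.induce _).toHom)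
          (hp₀.symm ▸ hp_path)
        set p₁ := p₀.mapLe (le_sup_left : G.induce {v | v ≠ u} ≤ G') with hp₁
        have hp₁path : p₁.IsPath := hp₀path.mapLe _
        have hno : s(a', b') ∉ p₁.reverse.edges := by
          rw [Walk.edges_reverse, List.mem_reverse, hp₁, mapLe_edges]
          intro hmem
          have : s(a, b) ∈ p.edges := by
            rw [← hp₀]; refine Eq.mpr (congrArg (s(a, b) ∈ ·) (Walk.edges_map _ p₀)) ?_
            exact List.mem_map.mpr ⟨s(a', b'), hmem, by simp [ha', hb']⟩
          exact hnadj (p.adj_of_mem_edges this)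
        have hc' : (Walk.cons hG'ab p₁.reverse).IsCycle :=
          (Walk.cons_isCycle_iff _ _).mpr ⟨hp₁path.reverse, hno⟩
        obtain ⟨x', hx'supp, hx'S⟩ := hhit' _ _ hc'
        have hx'S2 : x' ∈ S' := by simpa using hx'S
        refine ⟨↑x', ?_, Finset.mem_image_of_mem _ hx'S2⟩
        apply hp_sub
        rw [Walk.support_cons] at hx'supp
        rcases List.mem_cons.mp hx'supp with rfl | hmem
        · exact p.start_mem_support
        · rw [Walk.support_reverse, List.mem_reverse, hp₁, mapLe_support] at hmem
          rw [← hp₀]; refine Eq.mpr (congrArg ((↑x' : V) ∈ ·) (Walk.support_map _ p₀)) ?_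
          exact List.mem_map.mpr ⟨x', hmem, rfl⟩
      · have hvne : v ∈ {v | v ≠ u} := fun h => hu (h ▸ c.start_mem_support)
        obtain ⟨c₀, hc₀⟩ := exists_walk_induce G {v | v ≠ u} c hvne hvne
          (fun z hz h => hu (h ▸ hz))
        have hc₀cyc : c₀.IsCycle :=
          (Walk.map_isCycle_iff_of_injective (by exact Subtype.val_injective)).mp (hc₀.symm ▸ hc)
        have hc₁ : (c₀.mapLe (le_sup_left : G.induce {v | v ≠ u} ≤ G')).IsCycle :=
          hc₀cyc.mapLe _
        obtain ⟨x', hx'supp, hx'S⟩ := hhit' _ _ hc₁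
        have hx'S2 : x' ∈ S' := by simpa using hx'S
        refine ⟨↑x', ?_, Finset.mem_image_of_mem _ hx'S2⟩
        rw [mapLe_support] at hx'supp
        rw [← hc₀]; refine Eq.mpr (congrArg ((↑x' : V) ∈ ·) (Walk.support_map _ c₀)) ?_
        exact List.mem_map.mpr ⟨x', hx'supp, rfl⟩
    calc G.fvs ≤ (S'.image Subtype.val).card := Nat.sInf_le ⟨_, hAc, rfl⟩
      _ = S'.card := Finset.card_image_of_injective _ Subtype.val_injective
      _ = G'.fvs := hS'card
  · -- G'.fvs ≤ G.fvs
    obtain ⟨S, hSac, hScard⟩ := Nat.sInf_mem hne1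
    have hhit := (induce_isAcyclic_iff G _).mp hSac
    simp only [Set.mem_setOf_eq, not_not] at hhit
    obtain ⟨S₀, hu0, hcard0, hhit₀⟩ : ∃ S₀ : Finset V, u ∉ S₀ ∧ S₀.card ≤ S.card ∧
        ∀ (v : V) (c : G.Walk v v), c.IsCycle → ∃ x ∈ c.support, x ∈ S₀ := by
      by_cases huS : u ∈ S
      · refine ⟨insert a (S.erase u), ?_, ?_, ?_⟩
        · intro h
          rcases Finset.mem_insert.mp h with h | h
          · exact hua.ne h
          · exact Finset.notMem_erase u S h
        · calc (insert a (S.erase u)).card ≤ (S.erase u).card + 1 := Finset.card_insert_le _ _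
            _ = S.card := Finset.card_erase_add_one huS
        · intro v c hc
          obtain ⟨x, hxs, hxS⟩ := hhit v c hc
          by_cases hxu : x = u
          · subst hxu
            obtain ⟨p, hp_path, hp_u, hp_sub⟩ := surgeryA hdeg hua hub hab c hc hxs
            exact ⟨a, hp_sub a p.start_mem_support, Finset.mem_insert_self _ _⟩
          · exact ⟨x, hxs, Finset.mem_insert.mpr (Or.inr (Finset.mem_erase.mpr ⟨hxu, hxS⟩))⟩
      · exact ⟨S, huS, le_rfl, hhit⟩
    set S' : Finset {v : V // v ≠ u} := S₀.subtype (· ≠ u) with hS'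
    have hS'card : S'.card = S₀.card := by
      rw [hS', Finset.card_subtype, Finset.filter_true_of_mem]
      intro x hx
      exact fun h => hu0 (h ▸ hx)
    have hAc : (G'.induce {v | v ∉ S'}).IsAcyclic := by
      rw [induce_isAcyclic_iff]
      intro v' c' hc'
      simp only [Set.mem_setOf_eq, not_not]
      by_cases hE : s(a', b') ∈ c'.edges
      · obtain ⟨p', hp'_path, hp'_edge, hp'_sub⟩ := cycle_edge_path c' hc' hE
        have hind : ∀ e ∈ p'.edges, e ∈ (G.induce {v | v ≠ u}).edgeSet := hEdge p' hp'_edge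
        set pG : G.Walk b a := (p'.transfer _ hind).map (Embedding.induce {v | v ≠ u}).toHom with hpG
        have hpGpath : pG.IsPath :=
          (Walk.map_isPath_iff_of_injective (by exact Subtype.val_injective)).mpr
            (hp'_path.transfer hind)
        have hpGsupp : pG.support = p'.support.map Subtype.val := by
          rw [hpG]
          exact (Walk.support_map _ _).trans (by rw [Walk.support_transfer]; rfl)
        have hpGu : u ∉ pG.support := by
          rw [hpGsupp]
          intro hmem
          obtain ⟨x', -, hx⟩ := List.mem_map.mp hmem
          exact x'.2 hx
        have hcGcyc : (Walk.cons hub (pG.concat hua.symm)).IsCycle := by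
          rw [Walk.cons_isCycle_iff]
          constructor
          · rw [Walk.isPath_def, Walk.support_concat, List.nodup_append]
            refine ⟨hpGpath.support_nodup, List.nodup_singleton _, ?_⟩
            intro x hx x' hx' hxx'; subst hxx'
            rw [List.mem_singleton] at hx'
            subst hx'
            exact hpGu hx
          · rw [Walk.edges_concat, List.concat_eq_append, List.mem_append]
            rintro (h1 | h2)
            · exact hpGu (pG.fst_mem_support_of_mem_edges h1)
            · rw [List.mem_singleton] at h2
              rcases Sym2.eq_iff.mp h2 with ⟨h3, -⟩ | ⟨-, h4⟩
              · exact hua.ne h3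
              · exact hab h4.symm
        obtain ⟨x, hxsupp, hxS₀⟩ := hhit₀ u _ hcGcyc
        have hxu : x ≠ u := fun h => hu0 (h ▸ hxS₀)
        have hxpG : x ∈ pG.support := by
          rw [Walk.support_cons] at hxsupp
          rcases List.mem_cons.mp hxsupp with rfl | h
          · exact absurd rfl hxu
          · rw [Walk.support_concat, List.mem_append] at h
            rcases h with h | h
            · exact h
            · rw [List.mem_singleton] at h
              exact absurd h hxu
        rw [hpGsupp] at hxpG
        obtain ⟨x', hx'p, rfl⟩ := List.mem_map.mp hxpG
        exact ⟨x', hp'_sub x' hx'p, Finset.mem_subtype.mpr hxS₀⟩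
      · have hind : ∀ e ∈ c'.edges, e ∈ (G.induce {v | v ≠ u}).edgeSet := hEdge c' hE
        have hcGcyc : ((c'.transfer _ hind).map
            (Embedding.induce {v | v ≠ u}).toHom).IsCycle :=
          (hc'.transfer hind).map (by exact Subtype.val_injective)
        obtain ⟨x, hxsupp, hxS₀⟩ := hhit₀ _ _ hcGcyc
        rw [Walk.support_map, Walk.support_transfer] at hxsupp
        obtain ⟨x', hx', rfl⟩ := List.mem_map.mp hxsupp
        exact ⟨x', hx', Finset.mem_subtype.mpr hxS₀⟩
    calc G'.fvs ≤ S'.card := Nat.sInf_le ⟨S', hAc, rfl⟩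
      _ = S₀.card := hS'card
      _ ≤ S.card := hcard0
      _ = G.fvs := hScard
end

section
/- Let G be a finite simple graph containing a triangle on vertices x, y, z such that the vertex x has degree exactly 2, and suppose that the induced subgraph G' = G − {y, z} obtained by deleting y and z satisfies fvs(G') ≤ 2·cp(G'). Then fvs(G) ≤ 2·cp(G). -/
open SimpleGraph



section lift
variable {α β : Type*} {H : SimpleGraph α} {K : SimpleGraph β}

lemma walk_lift (f : H ↪g K) :
    ∀ {x y : β} (w : K.Walk x y) (a b : α) (hx : f a = x) (hy : f b = y),
      (∀ u ∈ w.support, u ∈ Set.range f) →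
      ∃ w' : H.Walk a b, w'.map f.toHom = w.copy hx.symm hy.symm := by
  intro x y w
  induction w with
  | nil =>
    intro a b hx hy _
    obtain rfl : a = b := f.injective (hx.trans hy.symm)
    subst hx
    exact ⟨.nil, by simp⟩
  | @cons x u y h p ih =>
    intro a b hx hy hsup
    obtain ⟨c, hc⟩ := hsup u (by simp)
    subst hx; subst hy
    have hadj : H.Adj a c := f.map_rel_iff.mp (by rwa [hc])
    obtain ⟨p', hp'⟩ := ih c b hc rfl (fun v hv => hsup v (by simp [hv]))
    refine ⟨.cons hadj p', ?_⟩
    subst hc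
    simp only [Walk.copy_rfl_rfl] at hp' ⊢
    rw [Walk.map_cons, hp']

lemma adj_of_mem_support_cycle {v x : α} {w : H.Walk v v} (hw : w.IsCycle)
    (hx : x ∈ w.support) : ∃ u, H.Adj x u := by
  obtain ⟨q, r, rfl⟩ := Walk.mem_support_iff_exists_append.mp hx
  cases r with
  | cons h r' => exact ⟨_, h⟩
  | nil =>
    cases q with
    | nil => simpa using hw.ne_nil
    | cons h q' => exact ⟨_, h⟩

end lift

lemma triangle_isCycle {V : Type*} {G : SimpleGraph V} {x y z : V} (hxy : G.Adj x y)
    (hyz : G.Adj y z) (hxz : G.Adj x z) :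
    (Walk.cons hxy (Walk.cons hyz (Walk.cons hxz.symm Walk.nil))).IsCycle := by
  have h1 := hxy.ne
  have h2 := hyz.ne
  have h3 := hxz.ne
  simp [Walk.isCycle_def, Walk.isTrail_def, Sym2.eq_iff, h1, h2, h3, Ne.symm h1, Ne.symm h2,
    Ne.symm h3]

lemma cp_bddAbove {W : Type*} [Finite W] (H : SimpleGraph W) :
    BddAbove {n | ∃ P : Finset (Set W), H.IsCyclePacking P ∧ P.card = n} := by
  haveI := Fintype.ofFinite W
  haveI := Fintype.ofFinite (Set W)
  exact ⟨Fintype.card (Set W), by rintro n ⟨P, _, rfl⟩; exact Finset.card_le_univ P⟩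

lemma le_cp {W : Type*} [Finite W] {H : SimpleGraph W} {P : Finset (Set W)}
    (hP : H.IsCyclePacking P) : P.card ≤ H.cp :=
  le_csSup (cp_bddAbove H) ⟨P, hP, rfl⟩

lemma exists_cp {W : Type*} [Finite W] (H : SimpleGraph W) :
    ∃ P : Finset (Set W), H.IsCyclePacking P ∧ P.card = H.cp := by
  refine Nat.sSup_mem ⟨0, ?_⟩ (cp_bddAbove H)
  exact ⟨∅, ⟨fun S hS => absurd hS (by simp), by simp⟩, rfl⟩

lemma fvs_le {W : Type*} {H : SimpleGraph W} {S : Finset W}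
    (h : (H.induce {v | v ∉ S}).IsAcyclic) : H.fvs ≤ S.card :=
  Nat.sInf_le ⟨S, h, rfl⟩

lemma exists_fvs {W : Type*} [Fintype W] (H : SimpleGraph W) :
    ∃ S : Finset W, (H.induce {v | v ∉ S}).IsAcyclic ∧ S.card = H.fvs := by
  have hmem : (Finset.univ : Finset W).card ∈
      {n | ∃ S : Finset W, (H.induce {v | v ∉ S}).IsAcyclic ∧ S.card = n} :=
    ⟨Finset.univ, fun v c _ => v.2 (Finset.mem_univ v.1), rfl⟩
  exact Nat.sInf_mem ⟨_, hmem⟩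

theorem fvs_le_two_cp_of_triangle_degTwo {V : Type*} [Fintype V] [DecidableEq V]
    (G : SimpleGraph V) [DecidableRel G.Adj] (x y z : V)
    (hxy : G.Adj x y) (hyz : G.Adj y z) (hxz : G.Adj x z)
    (hdeg : G.degree x = 2)
    (hind : (G.induce {v | v ≠ y ∧ v ≠ z}).fvs ≤ 2 * (G.induce {v | v ≠ y ∧ v ≠ z}).cp) :
    G.fvs ≤ 2 * G.cp := by
  classical
  set s : Set V := {v | v ≠ y ∧ v ≠ z} with hs
  set G' := G.induce s with hG'
  have hne_yz : y ≠ z := hyz.ne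
  have hxs : x ∈ s := ⟨hxy.ne, hxz.ne⟩
  -- neighbors of x are exactly y, z
  have hnbr : ∀ u, G.Adj x u → u = y ∨ u = z := by
    have hsub : ({y, z} : Finset V) ⊆ G.neighborFinset x := by
      intro u hu
      simp only [Finset.mem_insert, Finset.mem_singleton] at hu
      rcases hu with rfl | rfl
      · simpa using hxy
      · simpa using hxz
    have hcard : (G.neighborFinset x).card ≤ ({y, z} : Finset V).card := by
      rw [Finset.card_insert_of_notMem (by simpa using hne_yz), Finset.card_singleton]
      exact hdeg.le
    have heq := Finset.eq_of_subset_of_card_le hsub hcard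
    intro u hu
    have : u ∈ ({y, z} : Finset V) := heq ▸ (G.mem_neighborFinset x u).mpr hu
    simpa using this
  -- x is not in any cycle support of G'
  have hxnot : ∀ S : Set ↥s, G'.IsCycleSupport S → x ∉ Subtype.val '' S := by
    rintro S ⟨v, w, hw, rfl⟩ ⟨xs, hxsS, hxval⟩
    obtain ⟨u, hu⟩ := adj_of_mem_support_cycle hw hxsS
    have hadj : G.Adj x u.val := by
      have : G.Adj xs.val u.val := hu
      rwa [hxval] at this
    rcases hnbr _ hadj with h | h
    · exact u.2.1 h
    · exact u.2.2 h
  -- optimal packing of G'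
  obtain ⟨P', hP', hP'card⟩ := exists_cp G'
  -- build packing of G
  set F : Set ↥s → Set V := fun S => Subtype.val '' S with hF
  have hFinj : Function.Injective F := Set.image_injective.mpr Subtype.val_injective
  set tri : G.Walk x x := Walk.cons hxy (Walk.cons hyz (Walk.cons hxz.symm Walk.nil)) with htri
  set P : Finset (Set V) := insert {x, y, z} (P'.image F) with hP
  have htriset : ({x, y, z} : Set V) = {u | u ∈ tri.support} := by
    ext u
    rw [htri]
    simp only [Walk.support_cons, Walk.support_nil, Set.mem_insert_iff,
      Set.mem_singleton_iff, Set.mem_setOf_eq, List.mem_cons, List.not_mem_nil, or_false]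
    tauto
  have hPpack : G.IsCyclePacking P := by
    constructor
    · intro S hS
      rw [hP, Finset.mem_insert] at hS
      rcases hS with rfl | hS
      · exact ⟨x, tri, triangle_isCycle hxy hyz hxz, htriset⟩
      · obtain ⟨S0, hS0, rfl⟩ := Finset.mem_image.mp hS
        obtain ⟨v, w, hw, rfl⟩ := hP'.1 S0 hS0
        refine ⟨v.val, w.map (SimpleGraph.Embedding.induce (G := G) s).toHom,
          (Walk.map_isCycle_iff_of_injective
            (SimpleGraph.Embedding.induce (G := G) s).injective).mpr hw, ?_⟩
        ext u
        constructor
        · rintro ⟨a, ha, rfl⟩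
          show _ ∈ (Walk.map _ w).support
          rw [Walk.support_map]
          exact List.mem_map.mpr ⟨a, ha, rfl⟩
        · intro hu
          have hu2 : u ∈ List.map (⇑(SimpleGraph.Embedding.induce (G := G) s).toHom)
              w.support := by rw [← Walk.support_map]; exact hu
          obtain ⟨a, ha, he⟩ := List.mem_map.mp hu2
          exact ⟨a, ha, he⟩
    · intro A hA B hB hne
      have memcases : ∀ C ∈ P, C = {x, y, z} ∨ ∃ S0 ∈ P', F S0 = C := by
        intro C hC
        rw [hP, Finset.mem_insert] at hC
        rcases hC with rfl | hC
        · exact Or.inl rfl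
        · exact Or.inr (Finset.mem_image.mp hC)
      have hdisj : ∀ S0 ∈ P', Disjoint ({x, y, z} : Set V) (F S0) := by
        intro S0 hS0
        rw [Set.disjoint_left]
        rintro a (rfl | rfl | rfl)
        · exact fun h => hxnot S0 (hP'.1 S0 hS0) h
        · rintro ⟨a', _, ha'⟩; exact a'.2.1 ha'
        · rintro ⟨a', _, ha'⟩; exact a'.2.2 ha'
      rcases memcases A hA with rfl | ⟨SA, hSA, rfl⟩ <;>
        rcases memcases B hB with rfl | ⟨SB, hSB, hB'⟩
      · exact absurd rfl hne
      · exact hB' ▸ hdisj SB hSB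
      · exact (hdisj SA hSA).symm
      · subst hB'
        have hSne : SA ≠ SB := fun h => hne (by rw [h])
        exact (Set.disjoint_image_iff Subtype.val_injective).mpr
          (hP'.2 hSA hSB hSne)
  have hPcard : P.card = G'.cp + 1 := by
    rw [hP, Finset.card_insert_of_notMem, Finset.card_image_of_injective _ hFinj, hP'card]
    intro hmem
    obtain ⟨S0, _, hEq⟩ := Finset.mem_image.mp hmem
    have : y ∈ F S0 := hEq.symm ▸ (by simp : y ∈ ({x, y, z} : Set V))
    obtain ⟨a', _, ha'⟩ := this
    exact a'.2.1 ha'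
  have hcpG : G'.cp + 1 ≤ G.cp := by
    have := le_cp hPpack
    rwa [hPcard] at this
  -- optimal FVS of G'
  haveI : Fintype ↥s := Fintype.ofFinite _
  obtain ⟨S', hS'ac, hS'card⟩ := exists_fvs G'
  set Sbig : Finset V := S'.image Subtype.val ∪ {y, z} with hSbig
  have hSbigcard : Sbig.card ≤ S'.card + 2 := by
    have h1 : Sbig.card ≤ (S'.image Subtype.val).card + ({y, z} : Finset V).card := by
      rw [hSbig]; exact Finset.card_union_le _ _
    have h2 := Finset.card_image_le (f := Subtype.val) (s := S')
    have h3 : ({y, z} : Finset V).card ≤ 2 := by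
      rw [Finset.card_insert_of_notMem (by simpa using hne_yz), Finset.card_singleton]
    omega
  have hac : (G.induce {v | v ∉ Sbig}).IsAcyclic := by
    intro v c hc
    set f1 := SimpleGraph.Embedding.induce (G := G) {v | v ∉ Sbig} with hf1
    have hcmap : (c.map f1.toHom).IsCycle :=
      (Walk.map_isCycle_iff_of_injective f1.injective).mpr hc
    have hnotS : ∀ u ∈ (c.map f1.toHom).support, u ∉ Sbig := by
      intro u hu
      rw [Walk.support_map, List.mem_map] at hu
      obtain ⟨u', _, rfl⟩ := hu
      exact u'.2
    have hmem_s : ∀ u, u ∉ Sbig → u ∈ s := by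
      intro u hu
      constructor
      · intro h; exact hu (by simp [hSbig, h])
      · intro h; exact hu (by simp [hSbig, h])
    have hvx : (v : V) ∈ s := hmem_s _ v.2
    obtain ⟨c1, hc1eq⟩ := walk_lift (SimpleGraph.Embedding.induce (G := G) s)
      (c.map f1.toHom) ⟨v.1, hvx⟩ ⟨v.1, hvx⟩ rfl rfl
      (fun u hu => ⟨⟨u, hmem_s u (hnotS u hu)⟩, rfl⟩)
    replace hc1eq : c1.map (SimpleGraph.Embedding.induce (G := G) s).toHom = c.map f1.toHom := hc1eq
    have hc1cyc : c1.IsCycle :=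
      (Walk.map_isCycle_iff_of_injective (SimpleGraph.Embedding.induce (G := G) s).injective).mp
        (by rw [hc1eq]; exact hcmap)
    have hc1supp : ∀ u' ∈ c1.support, (u' : V) ∉ Sbig := by
      intro u' hu'
      apply hnotS
      have h := Walk.support_map (SimpleGraph.Embedding.induce (G := G) s).toHom c1
      rw [hc1eq] at h
      have h2 : (u' : V) ∈ List.map (⇑(SimpleGraph.Embedding.induce (G := G) s).toHom) c1.support :=
        List.mem_map.mpr ⟨u', hu', rfl⟩
      rw [← h] at h2
      exact h2
    have hnotS' : ∀ u' : ↥s, (u' : V) ∉ Sbig → u' ∉ S' := by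
      intro u' hu' hmem
      apply hu'
      rw [hSbig]
      exact Finset.mem_union_left _ (Finset.mem_image.mpr ⟨u', hmem, rfl⟩)
    have hvS' : (⟨v.1, hvx⟩ : ↥s) ∈ {u : ↥s | u ∉ S'} := hnotS' _ v.2
    obtain ⟨c2, hc2eq⟩ := walk_lift (SimpleGraph.Embedding.induce (G := G') {u | u ∉ S'})
      c1 ⟨⟨v.1, hvx⟩, hvS'⟩ ⟨⟨v.1, hvx⟩, hvS'⟩ rfl rfl
      (fun u' hu' => ⟨⟨u', hnotS' u' (hc1supp u' hu')⟩, rfl⟩)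
    replace hc2eq : c2.map (SimpleGraph.Embedding.induce (G := G') {u | u ∉ S'}).toHom = c1 := hc2eq
    have hc2cyc : c2.IsCycle :=
      (Walk.map_isCycle_iff_of_injective
        (SimpleGraph.Embedding.induce (G := G') {u | u ∉ S'}).injective).mp
        (by rw [hc2eq]; exact hc1cyc)
    exact hS'ac c2 hc2cyc
  have hfvsG : G.fvs ≤ S'.card + 2 := le_trans (fvs_le hac) hSbigcard
  omega
end

section
/- Let G be a finite simple graph containing a triangle on vertices x, y, z such that the vertex x has degree exactly 3, and suppose that the induced subgraph G' = G − {y, z} obtained by deleting y and z satisfies fvs(G') ≤ 2·cp(G'). Then fvs(G) ≤ 2·cp(G). -/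
open SimpleGraph

/- ### auxiliary lemmas -/

lemma aux_two_neighbors {W : Type*} {H : SimpleGraph W} {a : W} (c : H.Walk a a)
    (hc : c.IsCycle) : ∃ b p, b ≠ p ∧ H.Adj a b ∧ H.Adj a p := by
  cases c with
  | nil => exact absurd hc Walk.IsCycle.not_of_nil
  | @cons _ b _ h q =>
    have hq := (Walk.cons_isCycle_iff _ _).mp hc
    cases q with
    | nil => exact absurd h H.irrefl
    | @cons _ m _ h2 q2 =>
      obtain ⟨p, q'', h', heq⟩ := Walk.exists_cons_eq_concat h2 q2
      have hmem : s(p, a) ∈ (Walk.cons h2 q2).edges := by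
        rw [heq]; simp [Walk.edges_concat]
      refine ⟨b, p, ?_, h, h'.symm⟩
      rintro rfl
      exact hq.2 (by rwa [Sym2.eq_swap] at hmem)

lemma aux_bddAbove {V : Type*} [Fintype V] (G : SimpleGraph V) :
    BddAbove {n | ∃ P : Finset (Set V), G.IsCyclePacking P ∧ P.card = n} := by
  classical
  exact ⟨Fintype.card (Set V), by rintro n ⟨P, _, rfl⟩; exact Finset.card_le_univ P⟩

lemma aux_card_le_cp {V : Type*} [Fintype V] (G : SimpleGraph V) {P : Finset (Set V)}
    (hP : G.IsCyclePacking P) : P.card ≤ G.cp :=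
  le_csSup (aux_bddAbove G) ⟨P, hP, rfl⟩

lemma aux_cp_achieved {V : Type*} [Fintype V] (G : SimpleGraph V) :
    ∃ P : Finset (Set V), G.IsCyclePacking P ∧ P.card = G.cp := by
  have hne : {n | ∃ P : Finset (Set V), G.IsCyclePacking P ∧ P.card = n}.Nonempty :=
    ⟨0, ∅, ⟨fun S h => absurd h (Finset.notMem_empty S), by simp⟩, rfl⟩
  exact Nat.sSup_mem hne (aux_bddAbove G)

lemma aux_fvs_le {V : Type*} [Fintype V] (G : SimpleGraph V) {S : Finset V}
    (hS : (G.induce {v | v ∉ S}).IsAcyclic) : G.fvs ≤ S.card :=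
  Nat.sInf_le ⟨S, hS, rfl⟩

lemma aux_fvs_achieved {V : Type*} [Fintype V] (G : SimpleGraph V) :
    ∃ S : Finset V, (G.induce {v | v ∉ S}).IsAcyclic ∧ S.card = G.fvs := by
  have hne : {n | ∃ S : Finset V, (G.induce {v | v ∉ S}).IsAcyclic ∧ S.card = n}.Nonempty := by
    refine ⟨(Finset.univ : Finset V).card, Finset.univ, fun v w hw => ?_, rfl⟩
    exact absurd (Finset.mem_univ v.val) v.2
  exact Nat.sInf_mem hne

lemma aux_acyclic_of_hom {W W' : Type*} {H : SimpleGraph W} {K : SimpleGraph W'}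
    (f : H →g K) (hf : Function.Injective f) (hK : K.IsAcyclic) : H.IsAcyclic := by
  intro v w hw
  exact hK (w.map f) (hw.map hf)

theorem fvs_le_two_cp_of_triangle_degThree {V : Type*} [Fintype V] [DecidableEq V]
    (G : SimpleGraph V) [DecidableRel G.Adj] (x y z : V)
    (hxy : G.Adj x y) (hyz : G.Adj y z) (hxz : G.Adj x z)
    (hdeg : G.degree x = 3)
    (hind : (G.induce {v | v ≠ y ∧ v ≠ z}).fvs ≤ 2 * (G.induce {v | v ≠ y ∧ v ≠ z}).cp) :
    G.fvs ≤ 2 * G.cp := by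
  classical
  set A : Set V := {v | v ≠ y ∧ v ≠ z} with hA
  set G' := G.induce A with hG'
  -- basic distinctness
  have hxyne : x ≠ y := hxy.ne
  have hyzne : y ≠ z := hyz.ne
  have hxzne : x ≠ z := hxz.ne
  -- x has at most one neighbor outside {y, z}
  have huniq : ∀ u₁ u₂ : V, G.Adj x u₁ → G.Adj x u₂ → u₁ ≠ y → u₁ ≠ z → u₂ ≠ y → u₂ ≠ z →
      u₁ = u₂ := by
    intro u₁ u₂ h1 h2 h1y h1z h2y h2z
    by_contra hne
    have hsub : ({y, z, u₁, u₂} : Finset V) ⊆ G.neighborFinset x := by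
      intro v hv
      simp only [Finset.mem_insert, Finset.mem_singleton] at hv
      rcases hv with rfl | rfl | rfl | rfl <;>
        simp [SimpleGraph.mem_neighborFinset, hxy, hxz, h1, h2]
    have hcard : ({y, z, u₁, u₂} : Finset V).card = 4 := by
      rw [Finset.card_insert_of_notMem (by simp [hyzne, (Ne.symm h1y), (Ne.symm h2y)]),
        Finset.card_insert_of_notMem (by simp [(Ne.symm h1z), (Ne.symm h2z)]),
        Finset.card_insert_of_notMem (by simp [hne]), Finset.card_singleton]
    have := Finset.card_le_card hsub
    rw [hcard] at this
    rw [← SimpleGraph.card_neighborFinset_eq_degree] at hdeg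
    omega
  -- x is in no cycle support of G'
  have hxnot : ∀ T : Set ↥A, G'.IsCycleSupport T → ∀ a ∈ T, (a : V) ≠ x := by
    rintro T ⟨v, w, hw, rfl⟩ a ha hax
    have hmem : a ∈ w.support := ha
    have hc : (w.rotate a hmem).IsCycle := hw.rotate hmem
    obtain ⟨b, p, hbp, hab, hap⟩ := aux_two_neighbors _ hc
    have hAdjb : G.Adj x (b : V) := by
      have := hab; rw [hG'] at this
      simpa [SimpleGraph.comap_adj, hax] using this
    have hAdjp : G.Adj x (p : V) := by
      have := hap; rw [hG'] at this
      simpa [SimpleGraph.comap_adj, hax] using this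
    exact hbp (Subtype.ext (huniq _ _ hAdjb hAdjp b.2.1 b.2.2 p.2.1 p.2.2))
  -- get optimal packing of G'
  obtain ⟨P', hP', hPcard⟩ := aux_cp_achieved G'
  -- lift the packing and add the triangle
  set tri : Set V := {x, y, z} with htri
  set P : Finset (Set V) := insert tri (P'.image (Set.image Subtype.val)) with hP
  have himginj : Function.Injective (Set.image (Subtype.val : ↥A → V)) :=
    Set.image_injective.mpr Subtype.val_injective
  -- the lifted sets are cycle supports of G, avoiding x, y, z
  have hlift : ∀ T ∈ P', G.IsCycleSupport (Subtype.val '' T) := by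
    rintro T hT
    obtain ⟨v, w, hw, hTeq⟩ := hP'.1 T hT
    refine ⟨v.val, w.map (SimpleGraph.Embedding.induce A).toHom,
      hw.map Subtype.val_injective, ?_⟩
    ext u
    subst hTeq
    constructor
    · rintro ⟨a, ha, rfl⟩
      simp only [Set.mem_setOf_eq, Walk.support_map (SimpleGraph.Embedding.induce A).toHom w]
      convert List.mem_map_of_mem (f := Subtype.val) ha using 1
      exact Walk.support_map _ _
    · intro hu
      simp only [Set.mem_setOf_eq, Walk.support_map (SimpleGraph.Embedding.induce A).toHom w] at hu
      have hu' : u ∈ w.support.map Subtype.val := by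
        convert hu using 1
        exact (Walk.support_map (SimpleGraph.Embedding.induce A).toHom w).symm
      obtain ⟨a, ha, rfl⟩ := List.mem_map.mp hu'
      exact ⟨a, ha, rfl⟩
  have havoid : ∀ T ∈ P', ∀ u ∈ Subtype.val '' T, u ≠ x ∧ u ≠ y ∧ u ≠ z := by
    rintro T hT u ⟨a, ha, rfl⟩
    exact ⟨hxnot T (hP'.1 T hT) a ha, a.2.1, a.2.2⟩
  -- the triangle is a cycle support
  have htrisupp : G.IsCycleSupport tri := by
    refine ⟨x, Walk.cons hxy (Walk.cons hyz (Walk.cons hxz.symm Walk.nil)), ?_, ?_⟩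
    · rw [Walk.cons_isCycle_iff]
      constructor
      · simp [Walk.cons_isPath_iff, Walk.support_nil, hyzne, hxzne, Ne.symm hxzne,
          Ne.symm hxyne, hxyne]
      · simp [Walk.edges_cons, Walk.edges_nil, Sym2.eq, Sym2.rel_iff', hxyne, hxzne,
          Ne.symm hyzne, Ne.symm hxyne, hyzne]
    · ext u
      simp [htri, Walk.support_cons, Walk.support_nil]
      tauto
  -- the triangle is not a lifted set
  have htrinot : tri ∉ P'.image (Set.image Subtype.val) := by
    rw [Finset.mem_image]
    rintro ⟨T, hT, hTeq⟩
    have : y ∈ Subtype.val '' T := hTeq.symm ▸ (by simp [htri] : y ∈ tri)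
    exact ((havoid T hT y this).2.1) rfl
  -- P is a packing of G
  have hPack : G.IsCyclePacking P := by
    constructor
    · intro S hS
      rw [hP, Finset.mem_insert] at hS
      rcases hS with rfl | hS
      · exact htrisupp
      · obtain ⟨T, hT, rfl⟩ := Finset.mem_image.mp hS
        exact hlift T hT
    · intro S₁ hS₁ S₂ hS₂ hne
      simp only [hP, Finset.coe_insert, Set.mem_insert_iff, Finset.coe_image,
        Set.mem_image, Finset.mem_coe] at hS₁ hS₂
      have key : ∀ T ∈ P', Disjoint (Subtype.val '' T) tri := by
        intro T hT
        rw [Set.disjoint_right]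
        rintro u hu hu'
        obtain ⟨h1, h2, h3⟩ := havoid T hT u hu'
        simp only [htri, Set.mem_insert_iff, Set.mem_singleton_iff] at hu
        tauto
      rcases hS₁ with rfl | ⟨T₁, hT₁, rfl⟩ <;> rcases hS₂ with rfl | ⟨T₂, hT₂, rfl⟩
      · exact absurd rfl hne
      · exact (key T₂ hT₂).symm
      · exact key T₁ hT₁
      · refine (Set.disjoint_image_iff Subtype.val_injective).mpr ?_
        exact hP'.2 hT₁ hT₂ (fun h => hne (by rw [h]))
  -- card of P
  have hPcard2 : P.card = P'.card + 1 := by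
    rw [hP, Finset.card_insert_of_notMem htrinot,
      Finset.card_image_of_injective _ himginj]
  -- cp G ≥ cp G' + 1
  have hcp : G'.cp + 1 ≤ G.cp := by
    have := aux_card_le_cp G hPack
    rw [hPcard2, hPcard] at this
    exact this
  -- get optimal fvs of G'
  obtain ⟨S', hS', hScard⟩ := aux_fvs_achieved G'
  -- lift the fvs
  set S : Finset V := (S'.image Subtype.val) ∪ {y, z} with hS
  have hSacyc : (G.induce {v | v ∉ S}).IsAcyclic := by
    have hy : y ∈ S := by simp [hS]
    have hz : z ∈ S := by simp [hS]
    have hmem1 : ∀ v : V, v ∉ S → v ∈ A := by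
      intro v hv
      constructor
      · rintro rfl; exact hv hy
      · rintro rfl; exact hv hz
    have hmem2 : ∀ (v : V) (hv : v ∉ S), (⟨v, hmem1 v hv⟩ : ↥A) ∉ S' := by
      intro v hv hmem
      exact hv (by
        simp only [hS, Finset.mem_union]
        exact Or.inl (Finset.mem_image.mpr ⟨_, hmem, rfl⟩))
    refine aux_acyclic_of_hom
      (⟨fun v => ⟨⟨v.val, hmem1 v.val v.2⟩, hmem2 v.val v.2⟩, fun hab => hab⟩ :
        G.induce {v | v ∉ S} →g G'.induce {v | v ∉ S'}) ?_ hS'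
    intro a b hab
    exact Subtype.ext (congrArg (fun q => (q.val.val : V)) hab)
  have hfvs : G.fvs ≤ G'.fvs + 2 := by
    have h1 := aux_fvs_le G hSacyc
    have hu : S.card ≤ (S'.image Subtype.val).card + ({y, z} : Finset V).card :=
      Finset.card_union_le _ _
    have hi := Finset.card_image_le (s := S') (f := Subtype.val)
    have hyz2 : ({y, z} : Finset V).card ≤ 2 := by
      have := Finset.card_insert_le y ({z} : Finset V)
      simpa using this
    omega
  calc G.fvs ≤ G'.fvs + 2 := hfvs
    _ ≤ 2 * G'.cp + 2 := by omega
    _ = 2 * (G'.cp + 1) := by ring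
    _ ≤ 2 * G.cp := Nat.mul_le_mul_left 2 hcp
end
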